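/- arXiv:1311.4016 — 9 statements merged into one kernel-verified Lean document; each statement's English description precedes it below -/
import Mathlib

section
/- Let U ⊆ ℝ² be open, let λ be a nonzero real number, and let u, v : U → ℝ be smooth functions satisfying the sine-Gordon Bäcklund system with parameter λ on U. Then u satisfies the sine-Gordon equation on U: u_xy(x,y) = sin(u(x,y)) for all (x,y) ∈ U. -/
/-- Partial derivative in the `x`-direction of a function on `ℝ²`. -/
noncomputable def pdx (f : ℝ × ℝ → ℝ) (p : ℝ × ℝ) : ℝ := fderiv ℝ f p (1, 0)
/-- Partial derivative in the `y`-direction of a function on `ℝ²`. -/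
noncomputable def pdy (f : ℝ × ℝ → ℝ) (p : ℝ × ℝ) : ℝ := fderiv ℝ f p (0, 1)

lemma aux_dF {U : Set (ℝ × ℝ)} (hU : IsOpen U) {u : ℝ × ℝ → ℝ} (hu : ContDiffOn ℝ (⊤ : ℕ∞) u U)
    {p : ℝ × ℝ} (hp : p ∈ U) : DifferentiableAt ℝ (fderiv ℝ u) p :=
  ((hu.contDiffAt (hU.mem_nhds hp)).fderiv_right (m := 1) (WithTop.coe_le_coe.mpr le_top)).differentiableAt one_ne_zero

lemma aux_hasFDeriv {U : Set (ℝ × ℝ)} (hU : IsOpen U) {u : ℝ × ℝ → ℝ}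
    (hu : ContDiffOn ℝ (⊤ : ℕ∞) u U) {p : ℝ × ℝ} (hp : p ∈ U) (w : ℝ × ℝ) :
    HasFDerivAt (fun q => fderiv ℝ u q w)
      ((ContinuousLinearMap.apply ℝ ℝ w).comp (fderiv ℝ (fderiv ℝ u) p)) p :=
  (ContinuousLinearMap.apply ℝ ℝ w).hasFDerivAt.comp p (aux_dF hU hu hp).hasFDerivAt

lemma aux_pd {U : Set (ℝ × ℝ)} (hU : IsOpen U) {u : ℝ × ℝ → ℝ} (hu : ContDiffOn ℝ (⊤ : ℕ∞) u U)
    {p : ℝ × ℝ} (hp : p ∈ U) (w₁ w₂ : ℝ × ℝ) :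
    fderiv ℝ (fun q => fderiv ℝ u q w₁) p w₂ = fderiv ℝ (fderiv ℝ u) p w₂ w₁ := by
  rw [(aux_hasFDeriv hU hu hp w₁).fderiv]; rfl

/-- If smooth functions `u, v` on an open set `U ⊆ ℝ²` satisfy the sine-Gordon Bäcklund
system with parameter `lam ≠ 0`, then `u` satisfies the sine-Gordon equation
`u_xy = sin u` on `U`. -/
theorem sineGordon_backlund_first (U : Set (ℝ × ℝ)) (hU : IsOpen U)
    (lam : ℝ) (hlam : lam ≠ 0) (u v : ℝ × ℝ → ℝ)
    (hu : ContDiffOn ℝ (⊤ : ℕ∞) u U) (hv : ContDiffOn ℝ (⊤ : ℕ∞) v U)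
    (hBT1 : ∀ p ∈ U, pdx u p - pdx v p = 2 * lam * Real.sin ((u p + v p) / 2))
    (hBT2 : ∀ p ∈ U, pdy u p + pdy v p = (2 / lam) * Real.sin ((u p - v p) / 2)) :
    ∀ p ∈ U, pdy (fun q => pdx u q) p = Real.sin (u p) := by
  intro p hp
  have hup : ContDiffAt ℝ (⊤ : ℕ∞) u p := hu.contDiffAt (hU.mem_nhds hp)
  have hvp : ContDiffAt ℝ (⊤ : ℕ∞) v p := hv.contDiffAt (hU.mem_nhds hp)
  have hdu : DifferentiableAt ℝ u p := hup.differentiableAt (by simp)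
  have hdv : DifferentiableAt ℝ v p := hvp.differentiableAt (by simp)
  -- derivatives of the right-hand sides
  have hA1 : HasFDerivAt (fun q => (2:ℝ)⁻¹ * (u q + v q))
      ((2:ℝ)⁻¹ • (fderiv ℝ u p + fderiv ℝ v p)) p :=
    (hdu.hasFDerivAt.add hdv.hasFDerivAt).const_mul (2:ℝ)⁻¹
  have hA2 : HasFDerivAt (fun q => (2:ℝ)⁻¹ * (u q - v q))
      ((2:ℝ)⁻¹ • (fderiv ℝ u p - fderiv ℝ v p)) p :=
    (hdu.hasFDerivAt.sub hdv.hasFDerivAt).const_mul (2:ℝ)⁻¹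
  have hR1 := (hA1.sin).const_mul (2 * lam)
  have hR2 := (hA2.sin).const_mul (2 / lam)
  have heq1 : (fun q => pdx u q - pdx v q) =ᶠ[nhds p]
      (fun q => 2 * lam * Real.sin ((2:ℝ)⁻¹ * (u q + v q))) := by
    filter_upwards [hU.mem_nhds hp] with q hq
    rw [hBT1 q hq, inv_mul_eq_div]
  have heq2 : (fun q => pdy u q + pdy v q) =ᶠ[nhds p]
      (fun q => (2 / lam) * Real.sin ((2:ℝ)⁻¹ * (u q - v q))) := by
    filter_upwards [hU.mem_nhds hp] with q hq
    rw [hBT2 q hq, inv_mul_eq_div]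
  have hL1 := hR1.congr_of_eventuallyEq heq1
  have hL2 := hR2.congr_of_eventuallyEq heq2
  -- derivatives of the left-hand sides via second derivatives
  have hL1' := (aux_hasFDeriv hU hu hp ((1:ℝ), (0:ℝ))).sub (aux_hasFDeriv hU hv hp ((1:ℝ), (0:ℝ)))
  have hL2' := (aux_hasFDeriv hU hu hp ((0:ℝ), (1:ℝ))).add (aux_hasFDeriv hU hv hp ((0:ℝ), (1:ℝ)))
  have key1 := hL1.unique (by exact hL1')
  have key2 := hL2.unique (by exact hL2')
  have e1 := congrArg (fun L : ℝ × ℝ →L[ℝ] ℝ => L ((0:ℝ), (1:ℝ))) key1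
  have e2 := congrArg (fun L : ℝ × ℝ →L[ℝ] ℝ => L ((1:ℝ), (0:ℝ))) key2
  simp only [ContinuousLinearMap.smul_apply, ContinuousLinearMap.add_apply,
    ContinuousLinearMap.sub_apply, ContinuousLinearMap.comp_apply,
    ContinuousLinearMap.apply_apply, smul_eq_mul] at e1 e2
  -- substitute the Bäcklund relations
  have h1 : fderiv ℝ u p ((1:ℝ), (0:ℝ)) - fderiv ℝ v p ((1:ℝ), (0:ℝ))
      = 2 * lam * Real.sin ((u p + v p) / 2) := hBT1 p hp
  have h2 : fderiv ℝ u p ((0:ℝ), (1:ℝ)) + fderiv ℝ v p ((0:ℝ), (1:ℝ))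
      = (2 / lam) * Real.sin ((u p - v p) / 2) := hBT2 p hp
  rw [h2] at e1
  rw [h1] at e2
  -- symmetry of second derivatives
  have hsu : IsSymmSndFDerivAt ℝ u p := hup.isSymmSndFDerivAt (by rw [minSmoothness_of_isRCLikeNormedField]; exact WithTop.coe_le_coe.mpr le_top)
  have hsv : IsSymmSndFDerivAt ℝ v p := hvp.isSymmSndFDerivAt (by rw [minSmoothness_of_isRCLikeNormedField]; exact WithTop.coe_le_coe.mpr le_top)
  rw [hsu.eq ((1:ℝ),(0:ℝ)) ((0:ℝ),(1:ℝ)), hsv.eq ((1:ℝ),(0:ℝ)) ((0:ℝ),(1:ℝ))] at e2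
  -- rewrite goal as a second derivative
  have goal_eq : pdy (fun q => pdx u q) p
      = fderiv ℝ (fderiv ℝ u) p ((0:ℝ),(1:ℝ)) ((1:ℝ),(0:ℝ)) :=
    aux_pd hU hu hp ((1:ℝ),(0:ℝ)) ((0:ℝ),(1:ℝ))
  rw [goal_eq]
  -- final algebra
  have hcos1 : (2:ℝ)⁻¹ * (u p + v p) = (u p + v p) / 2 := by ring
  have hcos2 : (2:ℝ)⁻¹ * (u p - v p) = (u p - v p) / 2 := by ring
  rw [hcos1] at e1
  rw [hcos2] at e2
  have hsin : Real.sin (u p) = Real.sin ((u p + v p)/2) * Real.cos ((u p - v p)/2)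
      + Real.cos ((u p + v p)/2) * Real.sin ((u p - v p)/2) := by
    rw [← Real.sin_add]
    congr 1
    ring
  rw [hsin]
  have hclear : 2 * lam * (Real.cos ((u p + v p)/2) * ((2:ℝ)⁻¹ * ((2 / lam) * Real.sin ((u p - v p)/2))))
      = 2 * (Real.cos ((u p + v p)/2) * Real.sin ((u p - v p)/2)) := by
    field_simp
  have hclear2 : (2 / lam) * (Real.cos ((u p - v p)/2) * ((2:ℝ)⁻¹ * (2 * lam * Real.sin ((u p + v p)/2))))
      = 2 * (Real.cos ((u p - v p)/2) * Real.sin ((u p + v p)/2)) := by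
    field_simp
  rw [hclear] at e1
  rw [hclear2] at e2
  linarith [e1, e2]
end

section
/- Let U ⊆ ℝ² be open, let λ be a nonzero real number, and let u, v : U → ℝ be smooth functions satisfying the sine-Gordon Bäcklund system with parameter λ on U. Then v satisfies the sine-Gordon equation on U: v_xy(x,y) = sin(v(x,y)) for all (x,y) ∈ U. (Together with the analogous statement for u, this expresses that the system is an auto-Bäcklund transformation of the sine-Gordon equation.) -/
/-- Schwarz symmetry of second partial derivatives for a `C^∞` function at a point. -/
lemma pd_comm {f : ℝ × ℝ → ℝ} {p : ℝ × ℝ} (hf : ContDiffAt ℝ (⊤ : ℕ∞) f p) :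
    pdy (fun q => pdx f q) p = pdx (fun q => pdy f q) p := by
  have hd : DifferentiableAt ℝ (fderiv ℝ f) p :=
    (hf.fderiv_right (by rw [one_add_one_eq_two]; exact WithTop.coe_le_coe.mpr le_top : (1:WithTop ℕ∞) + 1 ≤ ((⊤ : ℕ∞) : WithTop ℕ∞))).differentiableAt one_ne_zero
  have h1 := fderiv_clm_apply hd (differentiableAt_const ((1:ℝ),(0:ℝ)))
  have h2 := fderiv_clm_apply hd (differentiableAt_const ((0:ℝ),(1:ℝ)))
  have hsymm := hf.isSymmSndFDerivAt ((by rw [minSmoothness_of_isRCLikeNormedField]; exact WithTop.coe_le_coe.mpr le_top) : minSmoothness ℝ 2 ≤ ((⊤ : ℕ∞) : WithTop ℕ∞))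
  show fderiv ℝ (fun q => fderiv ℝ f q (1,0)) p (0,1)
      = fderiv ℝ (fun q => fderiv ℝ f q (0,1)) p (1,0)
  rw [h1, h2]
  simp [hsymm (0,1) (1,0)]

/-- The `pdx` of a `C^∞` function is differentiable. -/
lemma pdx_diff {f : ℝ × ℝ → ℝ} {p : ℝ × ℝ} (hf : ContDiffAt ℝ (⊤ : ℕ∞) f p) :
    DifferentiableAt ℝ (fun q => pdx f q) p := by
  have hd : ContDiffAt ℝ 1 (fderiv ℝ f) p :=
    hf.fderiv_right (by rw [one_add_one_eq_two]; exact WithTop.coe_le_coe.mpr le_top : (1:WithTop ℕ∞) + 1 ≤ ((⊤ : ℕ∞) : WithTop ℕ∞))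
  exact (hd.clm_apply contDiffAt_const).differentiableAt one_ne_zero

lemma pdy_diff {f : ℝ × ℝ → ℝ} {p : ℝ × ℝ} (hf : ContDiffAt ℝ (⊤ : ℕ∞) f p) :
    DifferentiableAt ℝ (fun q => pdy f q) p := by
  have hd : ContDiffAt ℝ 1 (fderiv ℝ f) p :=
    hf.fderiv_right (by rw [one_add_one_eq_two]; exact WithTop.coe_le_coe.mpr le_top : (1:WithTop ℕ∞) + 1 ≤ ((⊤ : ℕ∞) : WithTop ℕ∞))
  exact (hd.clm_apply contDiffAt_const).differentiableAt one_ne_zero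

/-- If smooth functions `u, v` on an open set `U ⊆ ℝ²` satisfy the sine-Gordon Bäcklund
system with parameter `lam ≠ 0`, then `v` satisfies the sine-Gordon equation
`v_xy = sin v` on `U` (so the system is an auto-Bäcklund transformation). -/
theorem sineGordon_backlund_second (U : Set (ℝ × ℝ)) (hU : IsOpen U)
    (lam : ℝ) (hlam : lam ≠ 0) (u v : ℝ × ℝ → ℝ)
    (hu : ContDiffOn ℝ (⊤ : ℕ∞) u U) (hv : ContDiffOn ℝ (⊤ : ℕ∞) v U)
    (hBT1 : ∀ p ∈ U, pdx u p - pdx v p = 2 * lam * Real.sin ((u p + v p) / 2))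
    (hBT2 : ∀ p ∈ U, pdy u p + pdy v p = (2 / lam) * Real.sin ((u p - v p) / 2)) :
    ∀ p ∈ U, pdy (fun q => pdx v q) p = Real.sin (v p) := by
  intro p hp
  have huat : ContDiffAt ℝ (⊤ : ℕ∞) u p := hu.contDiffAt (hU.mem_nhds hp)
  have hvat : ContDiffAt ℝ (⊤ : ℕ∞) v p := hv.contDiffAt (hU.mem_nhds hp)
  have hu' : HasFDerivAt u (fderiv ℝ u p) p :=
    (huat.differentiableAt (by simp)).hasFDerivAt
  have hv' : HasFDerivAt v (fderiv ℝ v p) p :=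
    (hvat.differentiableAt (by simp)).hasFDerivAt
  set A := fderiv ℝ u p
  set B := fderiv ℝ v p
  set a := (u p + v p) / 2 with ha
  set b := (u p - v p) / 2 with hb
  -- derivative of sin((u+v)/2)
  have hplus : HasFDerivAt (fun q => (u q + v q) / 2) ((2:ℝ)⁻¹ • (A + B)) p := by
    simpa [div_eq_inv_mul] using (hu'.add hv').const_mul (2⁻¹ : ℝ)
  have hminus : HasFDerivAt (fun q => (u q - v q) / 2) ((2:ℝ)⁻¹ • (A - B)) p := by
    simpa [div_eq_inv_mul] using (hu'.sub hv').const_mul (2⁻¹ : ℝ)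
  have hsin1 : HasFDerivAt (fun q => Real.sin ((u q + v q) / 2))
      (Real.cos a • ((2:ℝ)⁻¹ • (A + B))) p := by
    simpa [Function.comp_def] using (Real.hasDerivAt_sin a).comp_hasFDerivAt p hplus
  have hsin2 : HasFDerivAt (fun q => Real.sin ((u q - v q) / 2))
      (Real.cos b • ((2:ℝ)⁻¹ • (A - B))) p := by
    simpa [Function.comp_def] using (Real.hasDerivAt_sin b).comp_hasFDerivAt p hminus
  -- first Bäcklund equation: v_x = u_x - 2 λ sin((u+v)/2) near p
  have hE1 : (fun q => pdx v q) =ᶠ[nhds p]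
      (fun q => pdx u q - 2 * lam * Real.sin ((u q + v q) / 2)) := by
    filter_upwards [hU.mem_nhds hp] with q hq
    have := hBT1 q hq; linarith
  have hR1 : HasFDerivAt (fun q => pdx u q - 2 * lam * Real.sin ((u q + v q) / 2))
      (fderiv ℝ (fun q => pdx u q) p - (2 * lam) • (Real.cos a • ((2:ℝ)⁻¹ • (A + B)))) p :=
    (pdx_diff huat).hasFDerivAt.sub (hsin1.const_mul (2 * lam))
  have key1 : pdy (fun q => pdx v q) p
      = pdy (fun q => pdx u q) p - 2 * lam * (Real.cos a * (2⁻¹ * (A (0,1) + B (0,1)))) := by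
    show fderiv ℝ (fun q => pdx v q) p (0,1) = _
    rw [hE1.fderiv_eq, hR1.fderiv]
    simp [pdy]
    ring
  -- second Bäcklund equation: v_y = (2/λ) sin((u-v)/2) - u_y near p
  have hE2 : (fun q => pdy v q) =ᶠ[nhds p]
      (fun q => (2 / lam) * Real.sin ((u q - v q) / 2) - pdy u q) := by
    filter_upwards [hU.mem_nhds hp] with q hq
    have := hBT2 q hq; linarith
  have hR2 : HasFDerivAt (fun q => (2 / lam) * Real.sin ((u q - v q) / 2) - pdy u q)
      ((2 / lam) • (Real.cos b • ((2:ℝ)⁻¹ • (A - B))) - fderiv ℝ (fun q => pdy u q) p) p :=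
    (hsin2.const_mul (2 / lam)).sub (pdy_diff huat).hasFDerivAt
  have key2 : pdx (fun q => pdy v q) p
      = 2 / lam * (Real.cos b * (2⁻¹ * (A (1,0) - B (1,0)))) - pdx (fun q => pdy u q) p := by
    show fderiv ℝ (fun q => pdy v q) p (1,0) = _
    rw [hE2.fderiv_eq, hR2.fderiv]
    simp [pdx]

  -- rewrite using the Bäcklund equations at p
  have hA01 : A (0,1) + B (0,1) = (2 / lam) * Real.sin b := hBT2 p hp
  have hA10 : A (1,0) - B (1,0) = 2 * lam * Real.sin a := hBT1 p hp
  -- Schwarz symmetry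
  have hsymu : pdy (fun q => pdx u q) p = pdx (fun q => pdy u q) p := pd_comm huat
  have hsymv : pdy (fun q => pdx v q) p = pdx (fun q => pdy v q) p := pd_comm hvat
  have hsv : Real.sin (v p) = Real.sin a * Real.cos b - Real.cos a * Real.sin b := by
    rw [← Real.sin_sub]; congr 1; rw [ha, hb]; ring
  rw [hA01] at key1
  rw [hA10] at key2
  have : 2 * pdy (fun q => pdx v q) p = 2 * Real.sin (v p) := by
    nth_rewrite 1 [two_mul]
    nth_rewrite 2 [hsymv]
    rw [key1, key2, hsymu, hsv]
    field_simp
    ring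
  linarith
end

section
/- Let U ⊆ ℝ² be open, λ ≠ 0 a real number, and u : U → ℝ a smooth function. Define P, Q : U × ℝ → ℝ by P(x,y,v) = u_x(x,y) − 2λ sin((u(x,y)+v)/2) and Q(x,y,v) = −u_y(x,y) + (2/λ) sin((u(x,y)−v)/2). Then for all (x,y) ∈ U and all v ∈ ℝ, the compatibility defect of the total differential system v_x = P, v_y = Q satisfies the identity (∂P/∂y + Q·∂P/∂v) − (∂Q/∂x + P·∂Q/∂v) = 2(u_xy(x,y) − sin(u(x,y))). In particular, the system v_x = P(x,y,v), v_y = Q(x,y,v) is compatible (the defect vanishes identically in v) if and only if u satisfies the sine-Gordon equation u_xy = sin u on U. -/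
/-- For a smooth function `u` on an open set `U ⊆ ℝ²` and `lam ≠ 0`, let
`P (x,y) w = u_x(x,y) - 2 lam sin((u(x,y)+w)/2)` and
`Q (x,y) w = -u_y(x,y) + (2/lam) sin((u(x,y)-w)/2)`.  Then the compatibility defect
`(P_y + Q P_w) - (Q_x + P Q_w)` of the total differential system `v_x = P, v_y = Q`
equals `2 (u_xy - sin u)`; in particular the system is compatible (the defect vanishes
identically) if and only if `u` satisfies the sine-Gordon equation on `U`. -/
theorem sineGordon_compatibility (U : Set (ℝ × ℝ)) (hU : IsOpen U)
    (lam : ℝ) (hlam : lam ≠ 0) (u : ℝ × ℝ → ℝ) (hu : ContDiffOn ℝ (⊤ : ℕ∞) u U)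
    (P Q : ℝ × ℝ → ℝ → ℝ)
    (hP : ∀ p w, P p w = pdx u p - 2 * lam * Real.sin ((u p + w) / 2))
    (hQ : ∀ p w, Q p w = -(pdy u p) + (2 / lam) * Real.sin ((u p - w) / 2)) :
    (∀ p ∈ U, ∀ w : ℝ,
      (pdy (fun q => P q w) p + Q p w * deriv (P p) w)
        - (pdx (fun q => Q q w) p + P p w * deriv (Q p) w)
      = 2 * (pdy (fun q => pdx u q) p - Real.sin (u p)))
    ∧ ((∀ p ∈ U, ∀ w : ℝ,
        (pdy (fun q => P q w) p + Q p w * deriv (P p) w)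
          - (pdx (fun q => Q q w) p + P p w * deriv (Q p) w) = 0)
      ↔ (∀ p ∈ U, pdy (fun q => pdx u q) p = Real.sin (u p))) := by
  have hmain : ∀ p ∈ U, ∀ w : ℝ,
      (pdy (fun q => P q w) p + Q p w * deriv (P p) w)
        - (pdx (fun q => Q q w) p + P p w * deriv (Q p) w)
      = 2 * (pdy (fun q => pdx u q) p - Real.sin (u p)) := by
    intro p hp w
    have hu' : ContDiffAt ℝ (⊤ : ℕ∞) u p := hu.contDiffAt (hU.mem_nhds hp)
    have hLd : DifferentiableAt ℝ u p := hu'.differentiableAt (by simp)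
    set L := fderiv ℝ u p with hLdef
    have hL : HasFDerivAt u L p := hLd.hasFDerivAt
    have hFd : DifferentiableAt ℝ (fderiv ℝ u) p :=
      (hu'.fderiv_right (m := 1) (WithTop.coe_le_coe.mpr (le_top : ((1 + 1 : ℕ) : ℕ∞) ≤ ⊤))).differentiableAt one_ne_zero
    set B2 := fderiv ℝ (fderiv ℝ u) p with hB2def
    have hF : HasFDerivAt (fderiv ℝ u) B2 p := hFd.hasFDerivAt
    have hsymm : B2 (1,0) (0,1) = B2 (0,1) (1,0) := by
      apply second_derivative_symmetric_of_eventually (f := u) ?_ hF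
      filter_upwards [hU.mem_nhds hp] with y hy
      exact ((hu.differentiableOn (by simp)).differentiableAt (hU.mem_nhds hy)).hasFDerivAt
    -- directional second derivatives
    have hpdx : ∀ v : ℝ × ℝ, HasFDerivAt (fun q => pdx u q)
        ((ContinuousLinearMap.apply ℝ ℝ ((1:ℝ),(0:ℝ))).comp B2) p := by
      intro v
      exact (ContinuousLinearMap.apply ℝ ℝ ((1:ℝ),(0:ℝ))).hasFDerivAt.comp p hF
    have hpdy' : HasFDerivAt (fun q => pdy u q)
        ((ContinuousLinearMap.apply ℝ ℝ ((0:ℝ),(1:ℝ))).comp B2) p :=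
      (ContinuousLinearMap.apply ℝ ℝ ((0:ℝ),(1:ℝ))).hasFDerivAt.comp p hF
    set A := (u p + w) / 2 with hA
    set Bb := (u p - w) / 2 with hB
    have hsinA : HasFDerivAt (fun q => Real.sin ((u q + w)/2))
        (Real.cos A • ((1/2 : ℝ) • L)) p := by
      have h1 : HasFDerivAt (fun q => (u q + w)/2) ((1/2 : ℝ) • L) p := by
        simpa [div_eq_inv_mul, smul_smul, Pi.smul_def, smul_eq_mul] using ((hL.add_const w).const_smul (1/2 : ℝ))
      exact (Real.hasDerivAt_sin A).comp_hasFDerivAt p h1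
    have hsinB : HasFDerivAt (fun q => Real.sin ((u q - w)/2))
        (Real.cos Bb • ((1/2 : ℝ) • L)) p := by
      have h1 : HasFDerivAt (fun q => (u q - w)/2) ((1/2 : ℝ) • L) p := by
        simpa [div_eq_inv_mul, smul_smul, Pi.smul_def, smul_eq_mul] using ((hL.sub_const w).const_smul (1/2 : ℝ))
      exact (Real.hasDerivAt_sin Bb).comp_hasFDerivAt p h1
    have hPfd : HasFDerivAt (fun q => P q w)
        (((ContinuousLinearMap.apply ℝ ℝ ((1:ℝ),(0:ℝ))).comp B2)
          - (2*lam) • (Real.cos A • ((1/2 : ℝ) • L))) p := by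
      have := (hpdx (0,1)).sub (hsinA.const_mul (2*lam))
      simpa [hP, Pi.sub_def] using this
    have hQfd : HasFDerivAt (fun q => Q q w)
        ((-((ContinuousLinearMap.apply ℝ ℝ ((0:ℝ),(1:ℝ))).comp B2))
          + (2/lam) • (Real.cos Bb • ((1/2 : ℝ) • L))) p := by
      have := (hpdy'.neg).add (hsinB.const_mul (2/lam))
      simpa [hQ, Pi.add_def, Pi.neg_def] using this
    have ePy : pdy (fun q => P q w) p
        = B2 (0,1) (1,0) - 2*lam * (Real.cos A * (1/2 * L (0,1))) := by
      have := hPfd.fderiv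
      simp only [pdy, this]
      simp [ContinuousLinearMap.comp_apply, smul_smul]
      try ring
    have eQx : pdx (fun q => Q q w) p
        = -(B2 (1,0) (0,1)) + 2/lam * (Real.cos Bb * (1/2 * L (1,0))) := by
      have := hQfd.fderiv
      simp only [pdx, this]
      simp [ContinuousLinearMap.comp_apply, smul_smul]
      try ring
    have ePw : deriv (P p) w = -(lam * Real.cos A) := by
      have h1 : HasDerivAt (fun v => (u p + v)/2) (1/2 : ℝ) w := by
        simpa using ((hasDerivAt_id w).const_add (u p)).div_const 2
      have h2 : HasDerivAt (fun v => Real.sin ((u p + v)/2)) (Real.cos A * (1/2)) w :=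
        by have := (Real.hasDerivAt_sin A).comp w h1; exact this
      have h3 : HasDerivAt (P p) (-(2*lam*(Real.cos A * (1/2)))) w := by
        have := (h2.const_mul (2*lam)).const_sub (pdx u p)
        have hfun : P p = fun v => pdx u p - 2*lam*Real.sin ((u p + v)/2) := funext fun v => hP p v
        rw [hfun]
        convert this using 1
        try ring
      rw [h3.deriv]; ring
    have eQw : deriv (Q p) w = -(1/lam * Real.cos Bb) := by
      have h1 : HasDerivAt (fun v => (u p - v)/2) (-(1/2) : ℝ) w := by
        have := ((hasDerivAt_id w).const_sub (u p)).div_const 2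
        exact this.congr_deriv (by norm_num)
      have h2 : HasDerivAt (fun v => Real.sin ((u p - v)/2)) (Real.cos Bb * (-(1/2))) w :=
        by have := (Real.hasDerivAt_sin Bb).comp w h1; exact this
      have h3 : HasDerivAt (Q p) ((2/lam)*(Real.cos Bb * (-(1/2)))) w := by
        have := (h2.const_mul (2/lam)).const_add (-(pdy u p))
        have hfun : Q p = fun v => -(pdy u p) + (2/lam)*Real.sin ((u p - v)/2) := funext fun v => hQ p v
        rw [hfun]; exact this
      rw [h3.deriv]; field_simp
    have ePxy : pdy (fun q => pdx u q) p = B2 (0,1) (1,0) := by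
      have := (hpdx (0,1)).fderiv
      simp only [pdy, this]
      simp [ContinuousLinearMap.comp_apply]
    have hsin : Real.sin (u p) = Real.sin A * Real.cos Bb + Real.cos A * Real.sin Bb := by
      rw [← Real.sin_add]; congr 1; rw [hA, hB]; ring
    have hux : pdx u p = L (1,0) := rfl
    have huy : pdy u p = L (0,1) := rfl
    rw [ePy, eQx, ePw, eQw, ePxy, hP, hQ, hsin, hux, huy, hsymm]
    field_simp
    ring
  refine ⟨hmain, ?_, ?_⟩
  · intro h p hp
    have h1 := hmain p hp 0
    have h2 := h p hp 0
    linarith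
  · intro h p hp w
    rw [hmain p hp w, h p hp]
    ring
end

section
/- For every nonzero real number λ and every real constant c, the function v : ℝ² → ℝ defined by v(x,y) = 4·arctan(exp(λx + y/λ + c)) is smooth and satisfies the sine-Gordon equation v_xy(x,y) = sin(v(x,y)) for all (x,y) ∈ ℝ². (These are the 1-soliton solutions of the sine-Gordon equation.) -/
lemma sin_four_arctan (x : ℝ) :
    Real.sin (4 * Real.arctan x) = 4*x*(1-x^2)/((1+x^2)^2) := by
  have hpos : (0:ℝ) < 1 + x^2 := by positivity
  have hs : Real.sqrt (1+x^2) ^ 2 = 1 + x^2 := Real.sq_sqrt hpos.le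
  have hs0 : Real.sqrt (1+x^2) ≠ 0 := by positivity
  have h4 : (4:ℝ) * Real.arctan x = 2*(2*Real.arctan x) := by ring
  rw [h4, Real.sin_two_mul, Real.cos_two_mul, Real.sin_two_mul, Real.sin_arctan,
    Real.cos_arctan]
  field_simp
  rw [show √(1 + x ^ 2) ^ 4 = (√(1 + x ^ 2) ^ 2) ^ 2 by ring, hs]
  ring

/-- For every `lam ≠ 0` and `c ∈ ℝ`, the 1-soliton function
`v(x,y) = 4 arctan(exp(lam x + y/lam + c))` is smooth and satisfies the sine-Gordon
equation `v_xy = sin v` on all of `ℝ²`. -/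
theorem one_soliton_solves_sineGordon (lam : ℝ) (hlam : lam ≠ 0) (c : ℝ)
    (v : ℝ × ℝ → ℝ)
    (hv : ∀ p : ℝ × ℝ, v p = 4 * Real.arctan (Real.exp (lam * p.1 + p.2 / lam + c))) :
    ContDiff ℝ (⊤ : ℕ∞) v ∧ ∀ p : ℝ × ℝ, pdy (fun q => pdx v q) p = Real.sin (v p) := by
  have hvf : v = fun p => 4 * Real.arctan (Real.exp (lam * p.1 + p.2 / lam + c)) :=
    funext hv
  set u : ℝ × ℝ → ℝ := fun p => lam * p.1 + p.2 / lam + c with hu_def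
  -- the linear part of u
  set L : ℝ × ℝ →L[ℝ] ℝ :=
    lam • ContinuousLinearMap.fst ℝ ℝ ℝ + lam⁻¹ • ContinuousLinearMap.snd ℝ ℝ ℝ with hL_def
  have hL : ∀ p : ℝ × ℝ, HasFDerivAt u L p := by
    intro p
    have : HasFDerivAt (fun q : ℝ × ℝ => L q + c) L p := L.hasFDerivAt.add_const c
    convert this using 1
    funext q
    simp [hL_def, hu_def]
    ring
  have hL10 : L (1, 0) = lam := by simp [hL_def]
  have hL01 : L (0, 1) = lam⁻¹ := by simp [hL_def]
  -- derivative of the outer 1-d function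
  have hg : ∀ t : ℝ, HasDerivAt (fun s => 4 * Real.arctan (Real.exp s))
      (4 * (1 / (1 + Real.exp t ^ 2) * Real.exp t)) t := by
    intro t
    exact ((Real.hasDerivAt_arctan (Real.exp t)).comp t (Real.hasDerivAt_exp t)).const_mul 4
  have hvd : ∀ p : ℝ × ℝ, HasFDerivAt v
      ((4 * (1 / (1 + Real.exp (u p) ^ 2) * Real.exp (u p))) • L) p := by
    intro p
    rw [hvf]
    exact (hg (u p)).comp_hasFDerivAt p (hL p)
  have hpdx : (fun q => pdx v q)
      = fun q => 4 * lam * (Real.exp (u q) / (1 + Real.exp (u q) ^ 2)) := by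
    funext q
    rw [pdx, (hvd q).fderiv]
    simp [hL10]
    ring
  -- derivative of F t = 4*lam*(exp t / (1+exp t^2))
  have hden : ∀ t : ℝ, (1 : ℝ) + Real.exp t ^ 2 ≠ 0 := by
    intro t; positivity
  have hF : ∀ t : ℝ, HasDerivAt (fun s => 4 * lam * (Real.exp s / (1 + Real.exp s ^ 2)))
      (4 * lam * ((Real.exp t * (1 + Real.exp t ^ 2)
        - Real.exp t * (2 * Real.exp t ^ 1 * Real.exp t)) / (1 + Real.exp t ^ 2) ^ 2)) t := by
    intro t
    exact ((Real.hasDerivAt_exp t).div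
      (((Real.hasDerivAt_exp t).pow 2).const_add 1) (hden t)).const_mul (4 * lam)
  constructor
  · rw [hvf]
    have hu : ContDiff ℝ (⊤ : ℕ∞) u := by
      apply ContDiff.add
      · exact (contDiff_const.mul contDiff_fst).add (contDiff_snd.div_const lam)
      · exact contDiff_const
    exact contDiff_const.mul (Real.contDiff_arctan.comp (Real.contDiff_exp.comp hu))
  · intro p
    rw [hpdx, pdy]
    have hd2 : HasFDerivAt (fun q => 4 * lam * (Real.exp (u q) / (1 + Real.exp (u q) ^ 2)))
        ((4 * lam * ((Real.exp (u p) * (1 + Real.exp (u p) ^ 2)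
          - Real.exp (u p) * (2 * Real.exp (u p) ^ 1 * Real.exp (u p)))
          / (1 + Real.exp (u p) ^ 2) ^ 2)) • L) p :=
      (hF (u p)).comp_hasFDerivAt p (hL p)
    rw [hd2.fderiv]
    rw [hv p, sin_four_arctan]
    set E := Real.exp (lam * p.1 + p.2 / lam + c) with hE
    have hEu : Real.exp (u p) = E := rfl
    simp only [ContinuousLinearMap.smul_apply, hL01, hEu, smul_eq_mul]
    have h1 : (1 : ℝ) + E ^ 2 ≠ 0 := by positivity
    field_simp
    ring
end

section
/- Let U ⊆ ℝ² be a connected open set, λ ≠ 0 a real number, and u : U → ℝ a C¹ function. Suppose v₁, v₂ : U → ℝ are differentiable functions each satisfying the sine-Gordon Bäcklund system with parameter λ paired with the same function u on U. If v₁(x₀,y₀) = v₂(x₀,y₀) for some point (x₀,y₀) ∈ U, then v₁ = v₂ on all of U. (Given u, the Bäcklund system completely determines both partial derivatives of v, so v is determined by its value at one point.) -/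
/-- |sin a - sin b| ≤ |a - b|. -/
lemma sin_lip (a b : ℝ) : |Real.sin a - Real.sin b| ≤ |a - b| := by
  rw [Real.sin_sub_sin]
  calc |2 * Real.sin ((a - b) / 2) * Real.cos ((a + b) / 2)|
      = 2 * |Real.sin ((a - b) / 2)| * |Real.cos ((a + b) / 2)| := by
        rw [abs_mul, abs_mul, abs_two]
    _ ≤ 2 * |(a - b) / 2| * 1 := by
        apply mul_le_mul (by
          have := Real.abs_sin_le_abs (x := (a - b) / 2)
          nlinarith) (Real.abs_cos_le_one _) (abs_nonneg _) (by positivity)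
    _ = |a - b| := by rw [abs_div, abs_two]; ring


/-- On a connected open set `U ⊆ ℝ²`, two differentiable solutions `v₁, v₂` of the
sine-Gordon Bäcklund system with parameter `lam ≠ 0` paired with the same `C¹` function
`u` agree on all of `U` as soon as they agree at one point. -/
theorem backlund_uniqueness (U : Set (ℝ × ℝ)) (hU : IsOpen U) (hUconn : IsPreconnected U)
    (lam : ℝ) (hlam : lam ≠ 0) (u : ℝ × ℝ → ℝ) (hu : ContDiffOn ℝ 1 u U)
    (v₁ v₂ : ℝ × ℝ → ℝ)
    (hv₁ : DifferentiableOn ℝ v₁ U) (hv₂ : DifferentiableOn ℝ v₂ U)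
    (h1x : ∀ p ∈ U, pdx u p - pdx v₁ p = 2 * lam * Real.sin ((u p + v₁ p) / 2))
    (h1y : ∀ p ∈ U, pdy u p + pdy v₁ p = (2 / lam) * Real.sin ((u p - v₁ p) / 2))
    (h2x : ∀ p ∈ U, pdx u p - pdx v₂ p = 2 * lam * Real.sin ((u p + v₂ p) / 2))
    (h2y : ∀ p ∈ U, pdy u p + pdy v₂ p = (2 / lam) * Real.sin ((u p - v₂ p) / 2))
    (p₀ : ℝ × ℝ) (hp₀ : p₀ ∈ U) (hval : v₁ p₀ = v₂ p₀) :
    ∀ p ∈ U, v₁ p = v₂ p := by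
  set w : ℝ × ℝ → ℝ := fun p => v₁ p - v₂ p with hwdef
  have hD1 : ∀ p ∈ U, DifferentiableAt ℝ v₁ p := fun p hp =>
    hv₁.differentiableAt (hU.mem_nhds hp)
  have hD2 : ∀ p ∈ U, DifferentiableAt ℝ v₂ p := fun p hp =>
    hv₂.differentiableAt (hU.mem_nhds hp)
  have hDw : ∀ p ∈ U, DifferentiableAt ℝ w p := fun p hp => (hD1 p hp).sub (hD2 p hp)
  have hfw : ∀ p ∈ U, ∀ z : ℝ × ℝ, fderiv ℝ w p z = fderiv ℝ v₁ p z - fderiv ℝ v₂ p z := by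
    intro p hp z
    rw [hwdef, fderiv_fun_sub (hD1 p hp) (hD2 p hp)]; rfl
  -- bounds on the partials of w
  have hbx : ∀ p ∈ U, |fderiv ℝ w p (1, 0)| ≤ |lam| * |w p| := by
    intro p hp
    rw [hfw p hp]
    have e1 := h1x p hp
    have e2 := h2x p hp
    have : fderiv ℝ v₁ p (1,0) - fderiv ℝ v₂ p (1,0)
        = 2 * lam * (Real.sin ((u p + v₂ p) / 2) - Real.sin ((u p + v₁ p) / 2)) := by
      have : pdx v₁ p - pdx v₂ p
          = 2 * lam * (Real.sin ((u p + v₂ p) / 2) - Real.sin ((u p + v₁ p) / 2)) := by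
        nlinarith [e1, e2]
      simpa [pdx] using this
    rw [this, abs_mul]
    have hsin := sin_lip ((u p + v₂ p) / 2) ((u p + v₁ p) / 2)
    have : |(u p + v₂ p) / 2 - (u p + v₁ p) / 2| = |w p| / 2 := by
      rw [hwdef]
      rw [show (u p + v₂ p) / 2 - (u p + v₁ p) / 2 = -((v₁ p - v₂ p)) / 2 by ring]
      rw [abs_div, abs_neg, abs_two]
    rw [this] at hsin
    calc |2 * lam| * |Real.sin ((u p + v₂ p) / 2) - Real.sin ((u p + v₁ p) / 2)|
        ≤ |2 * lam| * (|w p| / 2) := by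
          apply mul_le_mul_of_nonneg_left hsin (abs_nonneg _)
      _ = |lam| * |w p| := by rw [abs_mul, abs_two]; ring
  have hby : ∀ p ∈ U, |fderiv ℝ w p (0, 1)| ≤ |lam|⁻¹ * |w p| := by
    intro p hp
    rw [hfw p hp]
    have e1 := h1y p hp
    have e2 := h2y p hp
    have : fderiv ℝ v₁ p (0,1) - fderiv ℝ v₂ p (0,1)
        = (2 / lam) * (Real.sin ((u p - v₁ p) / 2) - Real.sin ((u p - v₂ p) / 2)) := by
      have : pdy v₁ p - pdy v₂ p
          = (2 / lam) * (Real.sin ((u p - v₁ p) / 2) - Real.sin ((u p - v₂ p) / 2)) := by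
        nlinarith [e1, e2]
      simpa [pdy] using this
    rw [this, abs_mul]
    have hsin := sin_lip ((u p - v₁ p) / 2) ((u p - v₂ p) / 2)
    have : |(u p - v₁ p) / 2 - (u p - v₂ p) / 2| = |w p| / 2 := by
      rw [hwdef]
      rw [show (u p - v₁ p) / 2 - (u p - v₂ p) / 2 = -((v₁ p - v₂ p)) / 2 by ring]
      rw [abs_div, abs_neg, abs_two]
    rw [this] at hsin
    calc |2 / lam| * |Real.sin ((u p - v₁ p) / 2) - Real.sin ((u p - v₂ p) / 2)|
        ≤ |2 / lam| * (|w p| / 2) := mul_le_mul_of_nonneg_left hsin (abs_nonneg _)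
      _ = |lam|⁻¹ * |w p| := by rw [abs_div, abs_two]; field_simp
  set C : ℝ := |lam| + |lam|⁻¹ with hCdef
  have hC0 : 0 ≤ C := by positivity
  -- full fderiv bound
  have hbnd : ∀ p ∈ U, ∀ z : ℝ × ℝ, |fderiv ℝ w p z| ≤ C * ‖z‖ * |w p| := by
    intro p hp z
    have hz : z = z.1 • ((1:ℝ), (0:ℝ)) + z.2 • ((0:ℝ), (1:ℝ)) := by
      ext <;> simp
    calc |fderiv ℝ w p z|
        = |z.1 * fderiv ℝ w p (1,0) + z.2 * fderiv ℝ w p (0,1)| := by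
          conv_lhs => rw [hz]
          rw [map_add, map_smul, map_smul]; norm_num
      _ ≤ |z.1| * |fderiv ℝ w p (1,0)| + |z.2| * |fderiv ℝ w p (0,1)| := by
          calc _ ≤ |z.1 * fderiv ℝ w p (1,0)| + |z.2 * fderiv ℝ w p (0,1)| := abs_add_le _ _
            _ = _ := by rw [abs_mul, abs_mul]
      _ ≤ ‖z‖ * (|lam| * |w p|) + ‖z‖ * (|lam|⁻¹ * |w p|) := by
          have h1 : |z.1| ≤ ‖z‖ := by simpa using norm_fst_le z
          have h2 : |z.2| ≤ ‖z‖ := by simpa using norm_snd_le z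
          exact add_le_add
            (mul_le_mul h1 (hbx p hp) (abs_nonneg _) (norm_nonneg _))
            (mul_le_mul h2 (hby p hp) (abs_nonneg _) (norm_nonneg _))
      _ = C * ‖z‖ * |w p| := by rw [hCdef]; ring
  -- local vanishing
  have localzero : ∀ p ∈ U, w p = 0 → ∃ r > 0, Metric.ball p r ⊆ U ∧
      ∀ q ∈ Metric.ball p r, w q = 0 := by
    intro p hp hwp
    obtain ⟨r, hr, hball⟩ := Metric.isOpen_iff.mp hU p hp
    refine ⟨r, hr, hball, ?_⟩
    intro q hq
    set γ : ℝ → ℝ × ℝ := fun t => p + t • (q - p) with hγdef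
    have hγmem : ∀ t ∈ Set.Icc (0:ℝ) 1, γ t ∈ Metric.ball p r := by
      intro t ht
      have : ‖γ t - p‖ = |t| * ‖q - p‖ := by
        rw [hγdef]; simp [norm_smul]
      rw [Metric.mem_ball, dist_eq_norm, this]
      have h1 : |t| ≤ 1 := abs_le.2 ⟨by linarith [ht.1], ht.2⟩
      have h2 : ‖q - p‖ < r := by rwa [← dist_eq_norm, ← Metric.mem_ball]
      calc |t| * ‖q - p‖ ≤ 1 * ‖q - p‖ := by gcongr
        _ < r := by simpa using h2
    have hderiv : ∀ t ∈ Set.Icc (0:ℝ) 1,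
        HasDerivAt (w ∘ γ) (fderiv ℝ w (γ t) (q - p)) t := by
      intro t ht
      have hγd : HasDerivAt γ (q - p) t := by
        have : HasDerivAt (fun s : ℝ => s • (q - p)) ((1:ℝ) • (q - p)) t :=
          (hasDerivAt_id t).smul_const (q - p)
        simpa [hγdef] using this.const_add p
      exact ((hDw _ (hball (hγmem t ht))).hasFDerivAt).comp_hasDerivAt t hγd
    have hcont : ContinuousOn (w ∘ γ) (Set.Icc (0:ℝ) 1) :=
      fun t ht => ((hderiv t ht).continuousAt).continuousWithinAt
    have hgron := norm_le_gronwallBound_of_norm_deriv_right_le (E := ℝ)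
      (f := w ∘ γ) (f' := fun t => fderiv ℝ w (γ t) (q - p))
      (δ := 0) (K := C * ‖q - p‖) (ε := 0) (a := 0) (b := 1)
      hcont
      (fun t ht => ((hderiv t (Set.mem_Icc_of_Ico ht)).hasDerivWithinAt))
      (by simp [hγdef, hwp])
      (by
        intro t ht
        have hmem := hball (hγmem t (Set.mem_Icc_of_Ico ht))
        have := hbnd (γ t) hmem (q - p)
        simpa [Real.norm_eq_abs, mul_comm, mul_assoc, mul_left_comm] using
          this.trans_eq (by ring))
    have := hgron 1 (by norm_num)
    rw [gronwallBound_ε0] at this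
    have h1 : ‖(w ∘ γ) 1‖ ≤ 0 := by simpa using this
    have : (w ∘ γ) 1 = 0 := by
      have := norm_le_zero_iff.mp h1
      exact this
    simpa [hγdef] using this
  -- clopen argument
  by_contra hcon
  push_neg at hcon
  obtain ⟨q₀, hq₀U, hq₀⟩ := hcon
  set S : Set (ℝ × ℝ) := {p | p ∈ U ∧ w p = 0} with hSdef
  set T : Set (ℝ × ℝ) := {p | p ∈ U ∧ w p ≠ 0} with hTdef
  have hSopen : IsOpen S := by
    rw [Metric.isOpen_iff]
    rintro p ⟨hpU, hpw⟩
    obtain ⟨r, hr, hball, hzero⟩ := localzero p hpU hpw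
    exact ⟨r, hr, fun q hq => ⟨hball hq, hzero q hq⟩⟩
  have hTopen : IsOpen T := by
    rw [Metric.isOpen_iff]
    rintro p ⟨hpU, hpw⟩
    have hcw : ContinuousAt w p :=
      (hDw p hpU).continuousAt
    have : ∀ᶠ q in nhds p, w q ≠ 0 := hcw.eventually_ne hpw
    have h2 : ∀ᶠ q in nhds p, q ∈ U := hU.mem_nhds hpU
    obtain ⟨r, hr, hb⟩ := Metric.eventually_nhds_iff_ball.mp (this.and h2)
    exact ⟨r, hr, fun q hq => ⟨(hb q hq).2, (hb q hq).1⟩⟩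
  have hcover : U ⊆ S ∪ T := by
    intro p hp
    by_cases h : w p = 0
    · exact Or.inl ⟨hp, h⟩
    · exact Or.inr ⟨hp, h⟩
  have hSne : (U ∩ S).Nonempty := ⟨p₀, hp₀, hp₀, by simp [hwdef, hval]⟩
  have hTne : (U ∩ T).Nonempty := ⟨q₀, hq₀U, hq₀U, by simp [hwdef]; exact sub_ne_zero.mpr hq₀⟩
  obtain ⟨z, _, ⟨_, hz1⟩, ⟨_, hz2⟩⟩ := hUconn S T hSopen hTopen hcover hSne hTne
  exact hz2 hz1
end

section
/- Let F(x,y,u,v,p), G(x,y,u,v,q), f(x,y,u,p,q), g(x,y,v,p,q) be smooth real-valued functions (defined on ℝ⁵) such that for all (x,y,u,v,p,q) ∈ ℝ⁶: (i) f(x,y,u,F(x,y,u,v,p),q) − g(x,y,v,p,G(x,y,u,v,q))·F_p(x,y,u,v,p) = F_y(x,y,u,v,p) + q·F_u(x,y,u,v,p) + G(x,y,u,v,q)·F_v(x,y,u,v,p); (ii) g(x,y,v,p,G(x,y,u,v,q)) − f(x,y,u,F(x,y,u,v,p),q)·G_q(x,y,u,v,q) = G_x(x,y,u,v,q) + F(x,y,u,v,p)·G_u(x,y,u,v,q)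 + p·G_v(x,y,u,v,q); and (iii) F_p(x,y,u,v,p)·G_q(x,y,u,v,q) ≠ 1. Suppose u, v : W → ℝ are smooth functions on an open set W ⊆ ℝ² satisfying the wavelike Bäcklund relations u_x(x,y) = F(x,y,u(x,y),v(x,y),v_x(x,y)) and v_y(x,y) = G(x,y,u(x,y),v(x,y),u_y(x,y)) on W. Then v satisfies the wavelike equation v_xy(x,y) = g(x,y,v(x,y),v_x(x,y),v_y(x,y)) on W. -/
section aux
open ContinuousLinearMap

private lemma fderiv5_apply (Φ : ℝ × ℝ × ℝ × ℝ × ℝ → ℝ) (s : ℝ × ℝ × ℝ × ℝ × ℝ)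
    (a b c d e : ℝ) :
    fderiv ℝ Φ s (a, b, c, d, e) =
      a * fderiv ℝ Φ s (1,0,0,0,0) + b * fderiv ℝ Φ s (0,1,0,0,0)
      + c * fderiv ℝ Φ s (0,0,1,0,0) + d * fderiv ℝ Φ s (0,0,0,1,0)
      + e * fderiv ℝ Φ s (0,0,0,0,1) := by
  have h : (a,b,c,d,e) = a•((1:ℝ),(0:ℝ),(0:ℝ),(0:ℝ),(0:ℝ)) + b•((0:ℝ),(1:ℝ),(0:ℝ),(0:ℝ),(0:ℝ))
      + c•((0:ℝ),(0:ℝ),(1:ℝ),(0:ℝ),(0:ℝ)) + d•((0:ℝ),(0:ℝ),(0:ℝ),(1:ℝ),(0:ℝ))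
      + e•((0:ℝ),(0:ℝ),(0:ℝ),(0:ℝ),(1:ℝ)) := by
    simp [Prod.ext_iff]
  rw [h]
  simp only [map_add, map_smul, smul_eq_mul]

private lemma dir1 (Φ : ℝ × ℝ × ℝ × ℝ × ℝ → ℝ) (hΦ : ContDiff ℝ (⊤ : ℕ∞) Φ) (x y z w p : ℝ) :
    deriv (fun t => Φ (t, y, z, w, p)) x = fderiv ℝ Φ (x,y,z,w,p) (1,0,0,0,0) := by
  have hγ : HasDerivAt (fun t : ℝ => ((t, y, z, w, p) : ℝ × ℝ × ℝ × ℝ × ℝ))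
      (1,0,0,0,0) x :=
    (hasDerivAt_id x).prodMk ((hasDerivAt_const x y).prodMk ((hasDerivAt_const x z).prodMk
      ((hasDerivAt_const x w).prodMk (hasDerivAt_const x p))))
  exact ((hΦ.differentiable (by simp) (x,y,z,w,p)).hasFDerivAt.comp_hasDerivAt x hγ).deriv

private lemma dir2 (Φ : ℝ × ℝ × ℝ × ℝ × ℝ → ℝ) (hΦ : ContDiff ℝ (⊤ : ℕ∞) Φ) (x y z w p : ℝ) :
    deriv (fun t => Φ (x, t, z, w, p)) y = fderiv ℝ Φ (x,y,z,w,p) (0,1,0,0,0) := by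
  have hγ : HasDerivAt (fun t : ℝ => ((x, t, z, w, p) : ℝ × ℝ × ℝ × ℝ × ℝ))
      (0,1,0,0,0) y :=
    (hasDerivAt_const y x).prodMk ((hasDerivAt_id y).prodMk ((hasDerivAt_const y z).prodMk
      ((hasDerivAt_const y w).prodMk (hasDerivAt_const y p))))
  exact ((hΦ.differentiable (by simp) (x,y,z,w,p)).hasFDerivAt.comp_hasDerivAt y hγ).deriv

private lemma dir3 (Φ : ℝ × ℝ × ℝ × ℝ × ℝ → ℝ) (hΦ : ContDiff ℝ (⊤ : ℕ∞) Φ) (x y z w p : ℝ) :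
    deriv (fun t => Φ (x, y, t, w, p)) z = fderiv ℝ Φ (x,y,z,w,p) (0,0,1,0,0) := by
  have hγ : HasDerivAt (fun t : ℝ => ((x, y, t, w, p) : ℝ × ℝ × ℝ × ℝ × ℝ))
      (0,0,1,0,0) z :=
    (hasDerivAt_const z x).prodMk ((hasDerivAt_const z y).prodMk ((hasDerivAt_id z).prodMk
      ((hasDerivAt_const z w).prodMk (hasDerivAt_const z p))))
  exact ((hΦ.differentiable (by simp) (x,y,z,w,p)).hasFDerivAt.comp_hasDerivAt z hγ).deriv

private lemma dir4 (Φ : ℝ × ℝ × ℝ × ℝ × ℝ → ℝ) (hΦ : ContDiff ℝ (⊤ : ℕ∞) Φ) (x y z w p : ℝ) :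
    deriv (fun t => Φ (x, y, z, t, p)) w = fderiv ℝ Φ (x,y,z,w,p) (0,0,0,1,0) := by
  have hγ : HasDerivAt (fun t : ℝ => ((x, y, z, t, p) : ℝ × ℝ × ℝ × ℝ × ℝ))
      (0,0,0,1,0) w :=
    (hasDerivAt_const w x).prodMk ((hasDerivAt_const w y).prodMk ((hasDerivAt_const w z).prodMk
      ((hasDerivAt_id w).prodMk (hasDerivAt_const w p))))
  exact ((hΦ.differentiable (by simp) (x,y,z,w,p)).hasFDerivAt.comp_hasDerivAt w hγ).deriv

private lemma dir5 (Φ : ℝ × ℝ × ℝ × ℝ × ℝ → ℝ) (hΦ : ContDiff ℝ (⊤ : ℕ∞) Φ) (x y z w p : ℝ) :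
    deriv (fun t => Φ (x, y, z, w, t)) p = fderiv ℝ Φ (x,y,z,w,p) (0,0,0,0,1) := by
  have hγ : HasDerivAt (fun t : ℝ => ((x, y, z, w, t) : ℝ × ℝ × ℝ × ℝ × ℝ))
      (0,0,0,0,1) p :=
    (hasDerivAt_const p x).prodMk ((hasDerivAt_const p y).prodMk ((hasDerivAt_const p z).prodMk
      ((hasDerivAt_const p w).prodMk (hasDerivAt_id p))))
  exact ((hΦ.differentiable (by simp) (x,y,z,w,p)).hasFDerivAt.comp_hasDerivAt p hγ).deriv

/-- Chain-rule step: if `h = Φ(x, y, A, B, C)` on the open set `W`, then the directional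
derivative of `h` at `p₀ ∈ W` is given by the chain rule. -/
private lemma key_step (Φ : ℝ × ℝ × ℝ × ℝ × ℝ → ℝ) (hΦ : ContDiff ℝ (⊤ : ℕ∞) Φ)
    (A B C h : ℝ × ℝ → ℝ) (W : Set (ℝ × ℝ)) (hW : IsOpen W) (p₀ : ℝ × ℝ) (hp₀ : p₀ ∈ W)
    (hA : ContDiffOn ℝ (⊤ : ℕ∞) A W) (hB : ContDiffOn ℝ (⊤ : ℕ∞) B W) (hC : ContDiffOn ℝ (⊤ : ℕ∞) C W)
    (heq : ∀ q ∈ W, h q = Φ (q.1, q.2, A q, B q, C q)) (wv : ℝ × ℝ) :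
    fderiv ℝ h p₀ wv =
      fderiv ℝ Φ (p₀.1, p₀.2, A p₀, B p₀, C p₀)
        (wv.1, wv.2, fderiv ℝ A p₀ wv, fderiv ℝ B p₀ wv, fderiv ℝ C p₀ wv) := by
  have hWn : W ∈ nhds p₀ := hW.mem_nhds hp₀
  have hA' : HasFDerivAt A (fderiv ℝ A p₀) p₀ :=
    ((hA.contDiffAt hWn).differentiableAt (by simp)).hasFDerivAt
  have hB' : HasFDerivAt B (fderiv ℝ B p₀) p₀ :=
    ((hB.contDiffAt hWn).differentiableAt (by simp)).hasFDerivAt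
  have hC' : HasFDerivAt C (fderiv ℝ C p₀) p₀ :=
    ((hC.contDiffAt hWn).differentiableAt (by simp)).hasFDerivAt
  set Z : ℝ × ℝ → ℝ × ℝ × ℝ × ℝ × ℝ := fun q => (q.1, q.2, A q, B q, C q) with hZdef
  set Z' := (ContinuousLinearMap.fst ℝ ℝ ℝ).prod
      ((ContinuousLinearMap.snd ℝ ℝ ℝ).prod ((fderiv ℝ A p₀).prod
        ((fderiv ℝ B p₀).prod (fderiv ℝ C p₀)))) with hZ'def
  have hZ : HasFDerivAt Z Z' p₀ :=
    (hasFDerivAt_fst).prodMk ((hasFDerivAt_snd).prodMk (hA'.prodMk (hB'.prodMk hC')))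
  have hcomp : HasFDerivAt (fun q => Φ (Z q))
      ((fderiv ℝ Φ (Z p₀)).comp Z') p₀ :=
    ((hΦ.differentiable (by simp) (Z p₀)).hasFDerivAt).comp p₀ hZ
  have hev : h =ᶠ[nhds p₀] fun q => Φ (Z q) := by
    filter_upwards [hWn] with q hq
    exact heq q hq
  have : fderiv ℝ h p₀ = (fderiv ℝ Φ (Z p₀)).comp Z' := by
    rw [hev.fderiv_eq, hcomp.fderiv]
  rw [this]
  simp [hZ'def, hZdef]

/-- Symmetry of second partial derivatives for a smooth function on an open set. -/
private lemma schwarz (h : ℝ × ℝ → ℝ) (W : Set (ℝ × ℝ)) (hW : IsOpen W)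
    (p₀ : ℝ × ℝ) (hp₀ : p₀ ∈ W) (hh : ContDiffOn ℝ (⊤ : ℕ∞) h W) :
    fderiv ℝ (fun q => fderiv ℝ h q (1,0)) p₀ (0,1)
      = fderiv ℝ (fun q => fderiv ℝ h q (0,1)) p₀ (1,0) := by
  have hWn : W ∈ nhds p₀ := hW.mem_nhds hp₀
  have hf : ∀ᶠ q in nhds p₀, HasFDerivAt h (fderiv ℝ h q) q := by
    filter_upwards [hWn] with q hq
    exact ((hh.contDiffAt (hW.mem_nhds hq)).differentiableAt (by simp)).hasFDerivAt
  have hd1 : ContDiffAt ℝ 1 (fderiv ℝ h) p₀ :=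
    (hh.contDiffAt hWn).fderiv_right (WithTop.coe_le_coe.mpr le_top)
  have hx : HasFDerivAt (fderiv ℝ h) (fderiv ℝ (fderiv ℝ h) p₀) p₀ :=
    (hd1.differentiableAt one_ne_zero).hasFDerivAt
  have hsym := second_derivative_symmetric_of_eventually hf hx
    ((0:ℝ),(1:ℝ)) ((1:ℝ),(0:ℝ))
  have ev : ∀ (c d : ℝ × ℝ),
      fderiv ℝ (fun q => fderiv ℝ h q c) p₀ d = fderiv ℝ (fderiv ℝ h) p₀ d c := by
    intro c d
    have := (((ContinuousLinearMap.apply ℝ ℝ c).hasFDerivAt).comp p₀ hx).fderiv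
    calc fderiv ℝ (fun q => fderiv ℝ h q c) p₀ d
        = fderiv ℝ ((ContinuousLinearMap.apply ℝ ℝ c) ∘ (fderiv ℝ h)) p₀ d := rfl
      _ = ((ContinuousLinearMap.apply ℝ ℝ c).comp (fderiv ℝ (fderiv ℝ h) p₀)) d := by rw [this]
      _ = fderiv ℝ (fderiv ℝ h) p₀ d c := rfl
  rw [ev, ev, hsym]

end aux

/-- Suppose `F(x,y,u,v,p)`, `G(x,y,u,v,q)`, `f(x,y,u,p,q)`, `g(x,y,v,p,q)` are smooth and
satisfy the structure equations
`f - g·F_p = F_y + q·F_u + G·F_v`, `g - f·G_q = G_x + F·G_u + p·G_v`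
(with the arguments as displayed) and the nondegeneracy condition `F_p·G_q ≠ 1`.
If smooth `u, v` on an open set `W ⊆ ℝ²` satisfy the wavelike Bäcklund relations
`u_x = F(x,y,u,v,v_x)`, `v_y = G(x,y,u,v,u_y)`, then `v_xy = g(x,y,v,v_x,v_y)` on `W`. -/
theorem wavelike_backlund_second_equation
    (F G f g : ℝ → ℝ → ℝ → ℝ → ℝ → ℝ)
    (hF : ContDiff ℝ (⊤ : ℕ∞) (fun s : ℝ × ℝ × ℝ × ℝ × ℝ => F s.1 s.2.1 s.2.2.1 s.2.2.2.1 s.2.2.2.2))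
    (hG : ContDiff ℝ (⊤ : ℕ∞) (fun s : ℝ × ℝ × ℝ × ℝ × ℝ => G s.1 s.2.1 s.2.2.1 s.2.2.2.1 s.2.2.2.2))
    (hf : ContDiff ℝ (⊤ : ℕ∞) (fun s : ℝ × ℝ × ℝ × ℝ × ℝ => f s.1 s.2.1 s.2.2.1 s.2.2.2.1 s.2.2.2.2))
    (hg : ContDiff ℝ (⊤ : ℕ∞) (fun s : ℝ × ℝ × ℝ × ℝ × ℝ => g s.1 s.2.1 s.2.2.1 s.2.2.2.1 s.2.2.2.2))
    (hi : ∀ x y z w p q : ℝ,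
      f x y z (F x y z w p) q - g x y w p (G x y z w q) * deriv (F x y z w) p
        = deriv (fun t => F x t z w p) y + q * deriv (fun t => F x y t w p) z
          + G x y z w q * deriv (fun t => F x y z t p) w)
    (hii : ∀ x y z w p q : ℝ,
      g x y w p (G x y z w q) - f x y z (F x y z w p) q * deriv (G x y z w) q
        = deriv (fun t => G t y z w q) x + F x y z w p * deriv (fun t => G x y t w q) z
          + p * deriv (fun t => G x y z t q) w)
    (hiii : ∀ x y z w p q : ℝ, deriv (F x y z w) p * deriv (G x y z w) q ≠ 1)
    (W : Set (ℝ × ℝ)) (hW : IsOpen W) (u v : ℝ × ℝ → ℝ)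
    (hu : ContDiffOn ℝ (⊤ : ℕ∞) u W) (hv : ContDiffOn ℝ (⊤ : ℕ∞) v W)
    (hBT1 : ∀ p ∈ W, pdx u p = F p.1 p.2 (u p) (v p) (pdx v p))
    (hBT2 : ∀ p ∈ W, pdy v p = G p.1 p.2 (u p) (v p) (pdy u p)) :
    ∀ p ∈ W, pdy (fun q => pdx v q) p = g p.1 p.2 (v p) (pdx v p) (pdy v p) := by
  intro p₀ hp₀
  have hWn : W ∈ nhds p₀ := hW.mem_nhds hp₀
  -- smoothness of the first partials
  have hux : ContDiffOn ℝ (⊤ : ℕ∞) (fun q => pdx u q) W := by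
    have h1 : ContDiffOn ℝ (⊤ : ℕ∞) (fderiv ℝ u) W := hu.fderiv_of_isOpen hW (by simp)
    exact h1.clm_apply contDiffOn_const
  have huy : ContDiffOn ℝ (⊤ : ℕ∞) (fun q => pdy u q) W := by
    have h1 : ContDiffOn ℝ (⊤ : ℕ∞) (fderiv ℝ u) W := hu.fderiv_of_isOpen hW (by simp)
    exact h1.clm_apply contDiffOn_const
  have hvx : ContDiffOn ℝ (⊤ : ℕ∞) (fun q => pdx v q) W := by
    have h1 : ContDiffOn ℝ (⊤ : ℕ∞) (fderiv ℝ v) W := hv.fderiv_of_isOpen hW (by simp)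
    exact h1.clm_apply contDiffOn_const
  have hvy : ContDiffOn ℝ (⊤ : ℕ∞) (fun q => pdy v q) W := by
    have h1 : ContDiffOn ℝ (⊤ : ℕ∞) (fderiv ℝ v) W := hv.fderiv_of_isOpen hW (by simp)
    exact h1.clm_apply contDiffOn_const
  set FΦ : ℝ × ℝ × ℝ × ℝ × ℝ → ℝ := fun s => F s.1 s.2.1 s.2.2.1 s.2.2.2.1 s.2.2.2.2 with hFΦ
  set GΦ : ℝ × ℝ × ℝ × ℝ × ℝ → ℝ := fun s => G s.1 s.2.1 s.2.2.1 s.2.2.2.1 s.2.2.2.2 with hGΦ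
  -- Step 1 : differentiate BT1 in the y-direction
  have step1 := key_step FΦ hF u v (fun q => pdx v q) (fun q => pdx u q) W hW p₀ hp₀
    hu hv hvx (fun q hq => hBT1 q hq) (0,1)
  -- Step 2 : differentiate BT2 in the x-direction
  have step2 := key_step GΦ hG u v (fun q => pdy u q) (fun q => pdy v q) W hW p₀ hp₀
    hu hv huy (fun q hq => hBT2 q hq) (1,0)
  -- rewrite partial derivative notations (all `rfl` by definition of pdx/pdy)
  have e1 : fderiv ℝ (fun q => pdx u q) p₀ ((0:ℝ),(1:ℝ)) = pdy (fun q => pdx u q) p₀ := rfl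
  have e2 : fderiv ℝ (fun q => pdy v q) p₀ ((1:ℝ),(0:ℝ)) = pdx (fun q => pdy v q) p₀ := rfl
  have e3 : fderiv ℝ u p₀ ((0:ℝ),(1:ℝ)) = pdy u p₀ := rfl
  have e4 : fderiv ℝ v p₀ ((0:ℝ),(1:ℝ)) = pdy v p₀ := rfl
  have e5 : fderiv ℝ u p₀ ((1:ℝ),(0:ℝ)) = pdx u p₀ := rfl
  have e6 : fderiv ℝ v p₀ ((1:ℝ),(0:ℝ)) = pdx v p₀ := rfl
  have e7 : fderiv ℝ (fun q => pdx v q) p₀ ((0:ℝ),(1:ℝ)) = pdy (fun q => pdx v q) p₀ := rfl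
  have e8 : fderiv ℝ (fun q => pdy u q) p₀ ((1:ℝ),(0:ℝ)) = pdx (fun q => pdy u q) p₀ := rfl
  rw [e1, e3, e4, e7] at step1
  rw [e2, e5, e6, e8] at step2
  -- Schwarz symmetry
  have schu : pdy (fun q => pdx u q) p₀ = pdx (fun q => pdy u q) p₀ :=
    schwarz u W hW p₀ hp₀ hu
  have schv : pdy (fun q => pdx v q) p₀ = pdx (fun q => pdy v q) p₀ :=
    schwarz v W hW p₀ hp₀ hv
  rw [← schv, ← schu] at step2
  -- expand directional derivatives of F and G into the one-variable derivatives
  rw [fderiv5_apply] at step1 step2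
  rw [← dir1 FΦ hF p₀.1 p₀.2 (u p₀) (v p₀) (pdx v p₀),
    ← dir2 FΦ hF p₀.1 p₀.2 (u p₀) (v p₀) (pdx v p₀),
    ← dir3 FΦ hF p₀.1 p₀.2 (u p₀) (v p₀) (pdx v p₀),
    ← dir4 FΦ hF p₀.1 p₀.2 (u p₀) (v p₀) (pdx v p₀),
    ← dir5 FΦ hF p₀.1 p₀.2 (u p₀) (v p₀) (pdx v p₀)] at step1
  rw [← dir1 GΦ hG p₀.1 p₀.2 (u p₀) (v p₀) (pdy u p₀),
    ← dir2 GΦ hG p₀.1 p₀.2 (u p₀) (v p₀) (pdy u p₀),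
    ← dir3 GΦ hG p₀.1 p₀.2 (u p₀) (v p₀) (pdy u p₀),
    ← dir4 GΦ hG p₀.1 p₀.2 (u p₀) (v p₀) (pdy u p₀),
    ← dir5 GΦ hG p₀.1 p₀.2 (u p₀) (v p₀) (pdy u p₀)] at step2
  simp only [hFΦ] at step1
  simp only [hGΦ] at step2
  norm_num at step1 step2
  -- substitute the Bäcklund relations
  have hBT1' := hBT1 p₀ hp₀
  have hBT2' := hBT2 p₀ hp₀
  rw [hBT2'] at step1 ⊢
  rw [hBT1'] at step2
  -- the structure equations at the relevant point
  have hi' := hi p₀.1 p₀.2 (u p₀) (v p₀) (pdx v p₀) (pdy u p₀)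
  have hii' := hii p₀.1 p₀.2 (u p₀) (v p₀) (pdx v p₀) (pdy u p₀)
  have hne : (1:ℝ) - deriv (F p₀.1 p₀.2 (u p₀) (v p₀)) (pdx v p₀)
      * deriv (G p₀.1 p₀.2 (u p₀) (v p₀)) (pdy u p₀) ≠ 0 :=
    sub_ne_zero.mpr (Ne.symm (hiii p₀.1 p₀.2 (u p₀) (v p₀) (pdx v p₀) (pdy u p₀)))
  have key : ((1:ℝ) - deriv (F p₀.1 p₀.2 (u p₀) (v p₀)) (pdx v p₀)
        * deriv (G p₀.1 p₀.2 (u p₀) (v p₀)) (pdy u p₀))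
      * (pdy (fun q => pdx v q) p₀
        - g p₀.1 p₀.2 (v p₀) (pdx v p₀)
            (G p₀.1 p₀.2 (u p₀) (v p₀) (pdy u p₀))) = 0 := by
    linear_combination step2 - hii'
      + deriv (G p₀.1 p₀.2 (u p₀) (v p₀)) (pdy u p₀) * step1
      - deriv (G p₀.1 p₀.2 (u p₀) (v p₀)) (pdy u p₀) * hi'
  rcases mul_eq_zero.mp key with h | h
  · exact absurd h hne
  · linarith [sub_eq_zero.mp h]
end

section
/- Let A, B, C, D, φ be smooth real-valued functions of (x,y,u) ∈ ℝ³ with φ_u nowhere zero and φ_uu + A·φ_u = 0 identically. Let u : W → ℝ be a smooth function on an open set W ⊆ ℝ² satisfying u_xy = A·u_x·u_y + B·u_x + C·u_y + D on W (coefficients evaluated at (x,y,u(x,y))), and define w(x,y) = φ(x,y,u(x,y)). Then w satisfies on W the equation w_xy = B̃·w_x + C̃·w_y + D̃, with no nonlinear first-order term, where B̃ = (φ_uy + B·φ_u)/φ_u, C̃ = (φ_xu + C·φ_u)/φ_u, and D̃ = φ_xy + D·φ_u − B̃·φ_x − C̃·φ_y, all evaluated at (x,y,u(x,y)). -/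
section Aux

private lemma fderiv3_split (G : ℝ × ℝ × ℝ → ℝ) (s : ℝ × ℝ × ℝ) (a b c : ℝ) :
    fderiv ℝ G s (a, b, c)
      = a * fderiv ℝ G s (1,0,0) + b * fderiv ℝ G s (0,1,0) + c * fderiv ℝ G s (0,0,1) := by
  have h : ((a, b, c) : ℝ × ℝ × ℝ) = a • (1,0,0) + b • (0,1,0) + c • (0,0,1) := by
    simp [Prod.ext_iff]
  rw [h, map_add, map_add, map_smul, map_smul, map_smul, smul_eq_mul, smul_eq_mul, smul_eq_mul]

private lemma deriv1 (G : ℝ × ℝ × ℝ → ℝ) (hG : Differentiable ℝ G) (x y z : ℝ) :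
    deriv (fun t => G (t, y, z)) x = fderiv ℝ G (x, y, z) (1,0,0) := by
  have hc : HasDerivAt (fun t : ℝ => ((t, y, z) : ℝ × ℝ × ℝ)) (1, 0, 0) x :=
    HasDerivAt.prodMk (hasDerivAt_id x) (HasDerivAt.prodMk (hasDerivAt_const x y) (hasDerivAt_const x z))
  exact ((hG (x, y, z)).hasFDerivAt.comp_hasDerivAt x hc).deriv

private lemma deriv2 (G : ℝ × ℝ × ℝ → ℝ) (hG : Differentiable ℝ G) (x y z : ℝ) :
    deriv (fun t => G (x, t, z)) y = fderiv ℝ G (x, y, z) (0,1,0) := by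
  have hc : HasDerivAt (fun t : ℝ => ((x, t, z) : ℝ × ℝ × ℝ)) (0, 1, 0) y :=
    HasDerivAt.prodMk (hasDerivAt_const y x) (HasDerivAt.prodMk (hasDerivAt_id y) (hasDerivAt_const y z))
  exact ((hG (x, y, z)).hasFDerivAt.comp_hasDerivAt y hc).deriv

private lemma deriv3 (G : ℝ × ℝ × ℝ → ℝ) (hG : Differentiable ℝ G) (x y z : ℝ) :
    deriv (fun t => G (x, y, t)) z = fderiv ℝ G (x, y, z) (0,0,1) := by
  have hc : HasDerivAt (fun t : ℝ => ((x, y, t) : ℝ × ℝ × ℝ)) (0, 0, 1) z :=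
    HasDerivAt.prodMk (hasDerivAt_const z x) (HasDerivAt.prodMk (hasDerivAt_const z y) (hasDerivAt_id z))
  exact ((hG (x, y, z)).hasFDerivAt.comp_hasDerivAt z hc).deriv

private lemma pd_smooth (G : ℝ × ℝ × ℝ → ℝ) (hG : ContDiff ℝ (⊤ : ℕ∞) G) (v : ℝ × ℝ × ℝ) :
    ContDiff ℝ (⊤ : ℕ∞) (fun s => fderiv ℝ G s v) :=
  (hG.fderiv_right (by simp)).clm_apply contDiff_const

end Aux

/-- If `φ_u` is nowhere zero and `φ_uu + A φ_u = 0` identically, then the point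
transformation `w = φ(x,y,u)` carries a solution `u` of
`u_xy = A u_x u_y + B u_x + C u_y + D` on `W` to a solution `w` of
`w_xy = B̃ w_x + C̃ w_y + D̃`, with no nonlinear first-order term, where
`B̃ = (φ_uy + B φ_u)/φ_u`, `C̃ = (φ_xu + C φ_u)/φ_u`,
`D̃ = φ_xy + D φ_u - B̃ φ_x - C̃ φ_y` (all evaluated at `(x,y,u(x,y))`). -/
theorem point_transform_eliminates_nonlinearity
    (A B C D φ : ℝ → ℝ → ℝ → ℝ)
    (hA : ContDiff ℝ (⊤ : ℕ∞) (fun s : ℝ × ℝ × ℝ => A s.1 s.2.1 s.2.2))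
    (hB : ContDiff ℝ (⊤ : ℕ∞) (fun s : ℝ × ℝ × ℝ => B s.1 s.2.1 s.2.2))
    (hC : ContDiff ℝ (⊤ : ℕ∞) (fun s : ℝ × ℝ × ℝ => C s.1 s.2.1 s.2.2))
    (hD : ContDiff ℝ (⊤ : ℕ∞) (fun s : ℝ × ℝ × ℝ => D s.1 s.2.1 s.2.2))
    (hφ : ContDiff ℝ (⊤ : ℕ∞) (fun s : ℝ × ℝ × ℝ => φ s.1 s.2.1 s.2.2))
    (hφu : ∀ x y z : ℝ, deriv (φ x y) z ≠ 0)
    (hφuu : ∀ x y z : ℝ, deriv (deriv (φ x y)) z + A x y z * deriv (φ x y) z = 0)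
    (W : Set (ℝ × ℝ)) (hW : IsOpen W) (u : ℝ × ℝ → ℝ) (hu : ContDiffOn ℝ (⊤ : ℕ∞) u W)
    (hPDE : ∀ p ∈ W, pdy (fun q => pdx u q) p
      = A p.1 p.2 (u p) * pdx u p * pdy u p + B p.1 p.2 (u p) * pdx u p
        + C p.1 p.2 (u p) * pdy u p + D p.1 p.2 (u p))
    (w : ℝ × ℝ → ℝ) (hw : ∀ p : ℝ × ℝ, w p = φ p.1 p.2 (u p)) :
    ∀ p ∈ W, pdy (fun q => pdx w q) p
      = ((deriv (fun t => deriv (φ p.1 t) (u p)) p.2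
            + B p.1 p.2 (u p) * deriv (φ p.1 p.2) (u p)) / deriv (φ p.1 p.2) (u p))
          * pdx w p
        + ((deriv (fun s => deriv (fun t => φ t p.2 s) p.1) (u p)
            + C p.1 p.2 (u p) * deriv (φ p.1 p.2) (u p)) / deriv (φ p.1 p.2) (u p))
          * pdy w p
        + (deriv (fun t => deriv (fun r => φ r t (u p)) p.1) p.2
            + D p.1 p.2 (u p) * deriv (φ p.1 p.2) (u p)
          - ((deriv (fun t => deriv (φ p.1 t) (u p)) p.2
              + B p.1 p.2 (u p) * deriv (φ p.1 p.2) (u p)) / deriv (φ p.1 p.2) (u p))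
            * deriv (fun t => φ t p.2 (u p)) p.1
          - ((deriv (fun s => deriv (fun t => φ t p.2 s) p.1) (u p)
              + C p.1 p.2 (u p) * deriv (φ p.1 p.2) (u p)) / deriv (φ p.1 p.2) (u p))
            * deriv (fun t => φ p.1 t (u p)) p.2) := by
  intro p hp
  -- notation
  set F : ℝ × ℝ × ℝ → ℝ := fun s => φ s.1 s.2.1 s.2.2 with hF
  have hFd : Differentiable ℝ F := hφ.differentiable (by simp)
  set g : ℝ × ℝ → ℝ × ℝ × ℝ := fun q => (q.1, q.2, u q) with hg
  -- derivative of g on W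
  have hudiff : ∀ q ∈ W, DifferentiableAt ℝ u q := fun q hq =>
    (hu.contDiffAt (hW.mem_nhds hq)).differentiableAt (by simp)
  have hgd : ∀ q ∈ W, HasFDerivAt g
      ((ContinuousLinearMap.fst ℝ ℝ ℝ).prod
        ((ContinuousLinearMap.snd ℝ ℝ ℝ).prod (fderiv ℝ u q))) q := fun q hq =>
    HasFDerivAt.prodMk (hasFDerivAt_fst) (HasFDerivAt.prodMk (hasFDerivAt_snd) (hudiff q hq).hasFDerivAt)
  have hwF : w = fun q => F (g q) := funext fun q => hw q
  -- first derivatives of w on W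
  have hwd : ∀ q ∈ W, HasFDerivAt w
      ((fderiv ℝ F (g q)).comp
        ((ContinuousLinearMap.fst ℝ ℝ ℝ).prod
          ((ContinuousLinearMap.snd ℝ ℝ ℝ).prod (fderiv ℝ u q)))) q := by
    intro q hq
    rw [hwF]
    exact (hFd (g q)).hasFDerivAt.comp q (hgd q hq)
  have hpdx : ∀ q ∈ W, pdx w q
      = fderiv ℝ F (g q) (1,0,0) + pdx u q * fderiv ℝ F (g q) (0,0,1) := by
    intro q hq
    have h1 := (hwd q hq).fderiv
    show fderiv ℝ w q (1, 0) = _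
    rw [h1]
    have : ((ContinuousLinearMap.fst ℝ ℝ ℝ).prod
        ((ContinuousLinearMap.snd ℝ ℝ ℝ).prod (fderiv ℝ u q))) (1, 0)
        = ((1 : ℝ), (0 : ℝ), fderiv ℝ u q (1, 0)) := by simp
    rw [ContinuousLinearMap.comp_apply, this, fderiv3_split]
    simp [pdx]
  have hpdy : ∀ q ∈ W, pdy w q
      = fderiv ℝ F (g q) (0,1,0) + pdy u q * fderiv ℝ F (g q) (0,0,1) := by
    intro q hq
    have h1 := (hwd q hq).fderiv
    show fderiv ℝ w q (0, 1) = _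
    rw [h1]
    have : ((ContinuousLinearMap.fst ℝ ℝ ℝ).prod
        ((ContinuousLinearMap.snd ℝ ℝ ℝ).prod (fderiv ℝ u q))) (0, 1)
        = ((0 : ℝ), (1 : ℝ), fderiv ℝ u q (0, 1)) := by simp
    rw [ContinuousLinearMap.comp_apply, this, fderiv3_split]
    simp [pdy]
  -- smooth first partials of F
  set Fx : ℝ × ℝ × ℝ → ℝ := fun s => fderiv ℝ F s (1,0,0) with hFx
  set Fu : ℝ × ℝ × ℝ → ℝ := fun s => fderiv ℝ F s (0,0,1) with hFu
  have hFxs : ContDiff ℝ (⊤ : ℕ∞) Fx := pd_smooth F hφ _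
  have hFus : ContDiff ℝ (⊤ : ℕ∞) Fu := pd_smooth F hφ _
  -- `pdx u` is differentiable at p
  have hpdxu : DifferentiableAt ℝ (fun q => fderiv ℝ u q (1, 0)) p := by
    have h1 : ContDiffOn ℝ (⊤ : ℕ∞) (fderiv ℝ u) W := hu.fderiv_of_isOpen hW (by simp)
    have h2 : ContDiffOn ℝ (⊤ : ℕ∞) (fun q => fderiv ℝ u q (1, 0)) W :=
      h1.clm_apply contDiffOn_const
    exact (h2.contDiffAt (hW.mem_nhds hp)).differentiableAt (by simp)
  -- the second mixed derivative of w
  have key : pdy (fun q => pdx w q) p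
      = fderiv ℝ Fx (g p) (0,1,0) + pdy u p * fderiv ℝ Fx (g p) (0,0,1)
        + pdx u p * (fderiv ℝ Fu (g p) (0,1,0) + pdy u p * fderiv ℝ Fu (g p) (0,0,1))
        + Fu (g p) * pdy (fun q => pdx u q) p := by
    have heq : (fun q => pdx w q) =ᶠ[nhds p]
        (fun q => Fx (g q) + (fun q => fderiv ℝ u q (1, 0)) q * Fu (g q)) := by
      filter_upwards [hW.mem_nhds hp] with q hq
      rw [hpdx q hq]; rfl
    have hder : HasFDerivAt
        (fun q => Fx (g q) + (fun q => fderiv ℝ u q (1, 0)) q * Fu (g q))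
        (((fderiv ℝ Fx (g p)).comp
            ((ContinuousLinearMap.fst ℝ ℝ ℝ).prod
              ((ContinuousLinearMap.snd ℝ ℝ ℝ).prod (fderiv ℝ u p))))
          + ((fun q => fderiv ℝ u q (1, 0)) p •
              ((fderiv ℝ Fu (g p)).comp
                ((ContinuousLinearMap.fst ℝ ℝ ℝ).prod
                  ((ContinuousLinearMap.snd ℝ ℝ ℝ).prod (fderiv ℝ u p))))
            + Fu (g p) • fderiv ℝ (fun q => fderiv ℝ u q (1, 0)) p)) p := by
      have h1 : HasFDerivAt (fun q => Fx (g q)) _ p :=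
        ((hFxs.differentiable (by simp) (g p)).hasFDerivAt.comp p (hgd p hp))
      have h2 : HasFDerivAt (fun q => Fu (g q)) _ p :=
        ((hFus.differentiable (by simp) (g p)).hasFDerivAt.comp p (hgd p hp))
      exact h1.add (hpdxu.hasFDerivAt.mul h2)
    have hfd : fderiv ℝ (fun q => pdx w q) p = _ := heq.fderiv_eq.trans hder.fderiv
    show fderiv ℝ (fun q => pdx w q) p (0, 1) = _
    rw [hfd]
    have hL : ((ContinuousLinearMap.fst ℝ ℝ ℝ).prod
        ((ContinuousLinearMap.snd ℝ ℝ ℝ).prod (fderiv ℝ u p))) (0, 1)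
        = ((0 : ℝ), (1 : ℝ), fderiv ℝ u p (0, 1)) := by simp
    simp only [ContinuousLinearMap.add_apply, ContinuousLinearMap.smul_apply,
      ContinuousLinearMap.comp_apply, hL, smul_eq_mul]
    rw [fderiv3_split Fx, fderiv3_split Fu]
    show _ = _ + _ * fderiv ℝ (fun q => fderiv ℝ u q (1,0)) p (0,1)
    simp only [pdx, pdy]
    ring
  rw [key]
  -- rewrite the scalar derivatives on the RHS in terms of fderiv of F, Fx, Fu
  have e_fu : deriv (φ p.1 p.2) (u p) = Fu (g p) := deriv3 F hFd p.1 p.2 (u p)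
  have e_fx : deriv (fun t => φ t p.2 (u p)) p.1 = Fx (g p) := deriv1 F hFd p.1 p.2 (u p)
  have e_fy : deriv (fun t => φ p.1 t (u p)) p.2 = fderiv ℝ F (g p) (0,1,0) :=
    deriv2 F hFd p.1 p.2 (u p)
  have e_fuy : deriv (fun t => deriv (φ p.1 t) (u p)) p.2 = fderiv ℝ Fu (g p) (0,1,0) := by
    have h1 : (fun t => deriv (φ p.1 t) (u p)) = fun t => Fu (p.1, t, u p) :=
      funext fun t => deriv3 F hFd p.1 t (u p)
    rw [h1]
    exact deriv2 Fu (hFus.differentiable (by simp)) p.1 p.2 (u p)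
  have e_fxu : deriv (fun s => deriv (fun t => φ t p.2 s) p.1) (u p)
      = fderiv ℝ Fx (g p) (0,0,1) := by
    have h1 : (fun s => deriv (fun t => φ t p.2 s) p.1) = fun s => Fx (p.1, p.2, s) :=
      funext fun s => deriv1 F hFd p.1 p.2 s
    rw [h1]
    exact deriv3 Fx (hFxs.differentiable (by simp)) p.1 p.2 (u p)
  have e_fxy : deriv (fun t => deriv (fun r => φ r t (u p)) p.1) p.2
      = fderiv ℝ Fx (g p) (0,1,0) := by
    have h1 : (fun t => deriv (fun r => φ r t (u p)) p.1) = fun t => Fx (p.1, t, u p) :=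
      funext fun t => deriv1 F hFd p.1 t (u p)
    rw [h1]
    exact deriv2 Fx (hFxs.differentiable (by simp)) p.1 p.2 (u p)
  -- the hypothesis on φ_uu
  have e_fuu : fderiv ℝ Fu (g p) (0,0,1) = -(A p.1 p.2 (u p) * Fu (g p)) := by
    have h1 : deriv (φ p.1 p.2) = fun z => Fu (p.1, p.2, z) :=
      funext fun z => deriv3 F hFd p.1 p.2 z
    have h2 := hφuu p.1 p.2 (u p)
    rw [h1] at h2
    have h3 : deriv (fun z => Fu (p.1, p.2, z)) (u p) = fderiv ℝ Fu (g p) (0,0,1) :=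
      deriv3 Fu (hFus.differentiable (by simp)) p.1 p.2 (u p)
    rw [h3] at h2
    beta_reduce at h2
    have h4 : Fu (p.1, p.2, u p) = Fu (g p) := rfl
    rw [h4] at h2
    linarith
  have hfu0 : Fu (g p) ≠ 0 := by rw [← e_fu]; exact hφu p.1 p.2 (u p)
  rw [e_fu, e_fx, e_fy, e_fuy, e_fxu, e_fxy, hpdx p hp, hpdy p hp, hPDE p hp, e_fuu]
  have eFx : fderiv ℝ F (g p) (1,0,0) = Fx (g p) := rfl
  have eFu : fderiv ℝ F (g p) (0,0,1) = Fu (g p) := rfl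
  rw [eFx, eFu]
  field_simp [hfu0]
  ring
end

section
/- Let F⁰, F¹, G⁰, G¹ be smooth real-valued functions of (x,y,u,v) ∈ ℝ⁴, let φ be a smooth function of (x,y,u) with φ_u nowhere zero, and let ψ be a smooth function of (x,y,v) with ψ_v nowhere zero. Suppose u, v : W → ℝ are smooth functions on an open set W ⊆ ℝ² satisfying the quasilinear wavelike Bäcklund relations u_x = F¹·v_x + F⁰ and v_y = G¹·u_y + G⁰ on W (coefficients evaluated at (x,y,u(x,y),v(x,y))). Define w(x,y) = φ(x,y,u(x,y)) and z(x,y) = ψ(x,y,v(x,y)). Then w and z satisfy relations of the same quasilinear wavelike form: w_x = F̃¹·z_x + F̃⁰ and z_y = G̃¹·w_y + G̃⁰, where F̃¹ = (φ_u·F¹)/ψ_v, F̃⁰ = φ_x + φ_u·F⁰ − F̃¹·ψ_x, G̃¹ = (ψ_v·G¹)/φ_u, and G̃⁰ = ψ_y + ψ_v·G⁰ − G̃¹·φ_y, with partial derivatives of φ evaluated at (x,y,u(x,y)) and of ψ at (x,y,v(x,y)). (Thus the quasilinear wavelike form of a Bäcklund transformation is invariant under point transformations w = φ(x,y,u), z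 = ψ(x,y,v).) -/
lemma lderiv_x (Φ : ℝ × ℝ × ℝ → ℝ) (hΦ : Differentiable ℝ Φ) (x y c : ℝ) :
    deriv (fun t => Φ (t, y, c)) x = fderiv ℝ Φ (x, y, c) (1, 0, 0) := by
  have h : HasDerivAt (fun t : ℝ => ((t, y, c) : ℝ × ℝ × ℝ)) (1, 0, 0) x :=
    HasDerivAt.prodMk (hasDerivAt_id x) (HasDerivAt.prodMk (hasDerivAt_const x y) (hasDerivAt_const x c))
  exact ((hΦ (x, y, c)).hasFDerivAt.comp_hasDerivAt x h).deriv

lemma lderiv_y (Φ : ℝ × ℝ × ℝ → ℝ) (hΦ : Differentiable ℝ Φ) (x y c : ℝ) :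
    deriv (fun t => Φ (x, t, c)) y = fderiv ℝ Φ (x, y, c) (0, 1, 0) := by
  have h : HasDerivAt (fun t : ℝ => ((x, t, c) : ℝ × ℝ × ℝ)) (0, 1, 0) y :=
    HasDerivAt.prodMk (hasDerivAt_const y x) (HasDerivAt.prodMk (hasDerivAt_id y) (hasDerivAt_const y c))
  exact ((hΦ (x, y, c)).hasFDerivAt.comp_hasDerivAt y h).deriv

lemma lderiv_z (Φ : ℝ × ℝ × ℝ → ℝ) (hΦ : Differentiable ℝ Φ) (x y c : ℝ) :
    deriv (fun t => Φ (x, y, t)) c = fderiv ℝ Φ (x, y, c) (0, 0, 1) := by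
  have h : HasDerivAt (fun t : ℝ => ((x, y, t) : ℝ × ℝ × ℝ)) (0, 0, 1) c :=
    HasDerivAt.prodMk (hasDerivAt_const c x) (HasDerivAt.prodMk (hasDerivAt_const c y) (hasDerivAt_id c))
  exact ((hΦ (x, y, c)).hasFDerivAt.comp_hasDerivAt c h).deriv

lemma comp_fderiv (Φ : ℝ × ℝ × ℝ → ℝ) (hΦ : Differentiable ℝ Φ) (g : ℝ × ℝ → ℝ)
    (p : ℝ × ℝ) (hg : DifferentiableAt ℝ g p) (d : ℝ × ℝ) :
    fderiv ℝ (fun q : ℝ × ℝ => Φ (q.1, q.2, g q)) p d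
      = fderiv ℝ Φ (p.1, p.2, g p) (d.1, d.2, fderiv ℝ g p d) := by
  have hin : HasFDerivAt (fun q : ℝ × ℝ => ((q.1, q.2, g q) : ℝ × ℝ × ℝ))
      ((ContinuousLinearMap.fst ℝ ℝ ℝ).prod
        ((ContinuousLinearMap.snd ℝ ℝ ℝ).prod (fderiv ℝ g p))) p :=
    HasFDerivAt.prodMk (hasFDerivAt_fst) (HasFDerivAt.prodMk (hasFDerivAt_snd) hg.hasFDerivAt)
  have h2 : HasFDerivAt (fun q : ℝ × ℝ => Φ (q.1, q.2, g q))
      (((fderiv ℝ Φ (p.1, p.2, g p))).comp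
        ((ContinuousLinearMap.fst ℝ ℝ ℝ).prod
          ((ContinuousLinearMap.snd ℝ ℝ ℝ).prod (fderiv ℝ g p)))) p :=
    (hΦ (p.1, p.2, g p)).hasFDerivAt.comp p hin
  rw [h2.fderiv]; rfl

lemma expand3 (L : (ℝ × ℝ × ℝ) →L[ℝ] ℝ) (a b c : ℝ) :
    L (a, b, c) = a * L (1, 0, 0) + b * L (0, 1, 0) + c * L (0, 0, 1) := by
  have h : ((a, b, c) : ℝ × ℝ × ℝ)
      = a • ((1 : ℝ), (0 : ℝ), (0 : ℝ)) + b • (0, 1, 0) + c • (0, 0, 1) := by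
    simp [Prod.ext_iff]
  rw [h, map_add, map_add, map_smul, map_smul, map_smul, smul_eq_mul, smul_eq_mul, smul_eq_mul]

/-- The quasilinear wavelike form of a Bäcklund transformation is invariant under point
transformations `w = φ(x,y,u)`, `z = ψ(x,y,v)` (with `φ_u`, `ψ_v` nowhere zero):
if `u_x = F¹ v_x + F⁰` and `v_y = G¹ u_y + G⁰` on `W`, then
`w_x = F̃¹ z_x + F̃⁰` and `z_y = G̃¹ w_y + G̃⁰`, where `F̃¹ = φ_u F¹ / ψ_v`,
`F̃⁰ = φ_x + φ_u F⁰ - F̃¹ ψ_x`, `G̃¹ = ψ_v G¹ / φ_u`, `G̃⁰ = ψ_y + ψ_v G⁰ - G̃¹ φ_y`. -/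
theorem quasilinear_wavelike_form_invariant
    (F0 F1 G0 G1 : ℝ → ℝ → ℝ → ℝ → ℝ)
    (hF0 : ContDiff ℝ (⊤ : ℕ∞) (fun s : ℝ × ℝ × ℝ × ℝ => F0 s.1 s.2.1 s.2.2.1 s.2.2.2))
    (hF1 : ContDiff ℝ (⊤ : ℕ∞) (fun s : ℝ × ℝ × ℝ × ℝ => F1 s.1 s.2.1 s.2.2.1 s.2.2.2))
    (hG0 : ContDiff ℝ (⊤ : ℕ∞) (fun s : ℝ × ℝ × ℝ × ℝ => G0 s.1 s.2.1 s.2.2.1 s.2.2.2))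
    (hG1 : ContDiff ℝ (⊤ : ℕ∞) (fun s : ℝ × ℝ × ℝ × ℝ => G1 s.1 s.2.1 s.2.2.1 s.2.2.2))
    (φ ψ : ℝ → ℝ → ℝ → ℝ)
    (hφ : ContDiff ℝ (⊤ : ℕ∞) (fun s : ℝ × ℝ × ℝ => φ s.1 s.2.1 s.2.2))
    (hψ : ContDiff ℝ (⊤ : ℕ∞) (fun s : ℝ × ℝ × ℝ => ψ s.1 s.2.1 s.2.2))
    (hφu : ∀ x y z : ℝ, deriv (φ x y) z ≠ 0)
    (hψv : ∀ x y z : ℝ, deriv (ψ x y) z ≠ 0)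
    (W : Set (ℝ × ℝ)) (hW : IsOpen W) (u v : ℝ × ℝ → ℝ)
    (hu : ContDiffOn ℝ (⊤ : ℕ∞) u W) (hv : ContDiffOn ℝ (⊤ : ℕ∞) v W)
    (hBT1 : ∀ p ∈ W, pdx u p = F1 p.1 p.2 (u p) (v p) * pdx v p + F0 p.1 p.2 (u p) (v p))
    (hBT2 : ∀ p ∈ W, pdy v p = G1 p.1 p.2 (u p) (v p) * pdy u p + G0 p.1 p.2 (u p) (v p))
    (w z : ℝ × ℝ → ℝ)
    (hw : ∀ p : ℝ × ℝ, w p = φ p.1 p.2 (u p))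
    (hz : ∀ p : ℝ × ℝ, z p = ψ p.1 p.2 (v p)) :
    ∀ p ∈ W,
      (pdx w p
        = (deriv (φ p.1 p.2) (u p) * F1 p.1 p.2 (u p) (v p) / deriv (ψ p.1 p.2) (v p))
            * pdx z p
          + (deriv (fun t => φ t p.2 (u p)) p.1
            + deriv (φ p.1 p.2) (u p) * F0 p.1 p.2 (u p) (v p)
            - (deriv (φ p.1 p.2) (u p) * F1 p.1 p.2 (u p) (v p) / deriv (ψ p.1 p.2) (v p))
              * deriv (fun t => ψ t p.2 (v p)) p.1)) ∧
      (pdy z p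
        = (deriv (ψ p.1 p.2) (v p) * G1 p.1 p.2 (u p) (v p) / deriv (φ p.1 p.2) (u p))
            * pdy w p
          + (deriv (fun t => ψ p.1 t (v p)) p.2
            + deriv (ψ p.1 p.2) (v p) * G0 p.1 p.2 (u p) (v p)
            - (deriv (ψ p.1 p.2) (v p) * G1 p.1 p.2 (u p) (v p) / deriv (φ p.1 p.2) (u p))
              * deriv (fun t => φ p.1 t (u p)) p.2)) := by
  intro p hp
  set Φ : ℝ × ℝ × ℝ → ℝ := fun s => φ s.1 s.2.1 s.2.2 with hΦdef
  set Ψ : ℝ × ℝ × ℝ → ℝ := fun s => ψ s.1 s.2.1 s.2.2 with hΨdef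
  have hΦd : Differentiable ℝ Φ := hφ.differentiable (by simp)
  have hΨd : Differentiable ℝ Ψ := hψ.differentiable (by simp)
  have hud : DifferentiableAt ℝ u p :=
    (hu.contDiffAt (hW.mem_nhds hp)).differentiableAt (by simp)
  have hvd : DifferentiableAt ℝ v p :=
    (hv.contDiffAt (hW.mem_nhds hp)).differentiableAt (by simp)
  have hw' : w = fun q : ℝ × ℝ => Φ (q.1, q.2, u q) := funext fun q => hw q
  have hz' : z = fun q : ℝ × ℝ => Ψ (q.1, q.2, v q) := funext fun q => hz q
  have hA : deriv (fun t => φ t p.2 (u p)) p.1 = fderiv ℝ Φ (p.1, p.2, u p) (1, 0, 0) :=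
    lderiv_x Φ hΦd p.1 p.2 (u p)
  have hAy : deriv (fun t => φ p.1 t (u p)) p.2 = fderiv ℝ Φ (p.1, p.2, u p) (0, 1, 0) :=
    lderiv_y Φ hΦd p.1 p.2 (u p)
  have hB : deriv (φ p.1 p.2) (u p) = fderiv ℝ Φ (p.1, p.2, u p) (0, 0, 1) :=
    lderiv_z Φ hΦd p.1 p.2 (u p)
  have hC : deriv (fun t => ψ t p.2 (v p)) p.1 = fderiv ℝ Ψ (p.1, p.2, v p) (1, 0, 0) :=
    lderiv_x Ψ hΨd p.1 p.2 (v p)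
  have hCy : deriv (fun t => ψ p.1 t (v p)) p.2 = fderiv ℝ Ψ (p.1, p.2, v p) (0, 1, 0) :=
    lderiv_y Ψ hΨd p.1 p.2 (v p)
  have hD : deriv (ψ p.1 p.2) (v p) = fderiv ℝ Ψ (p.1, p.2, v p) (0, 0, 1) :=
    lderiv_z Ψ hΨd p.1 p.2 (v p)
  have hBne : fderiv ℝ Φ (p.1, p.2, u p) (0, 0, 1) ≠ 0 := hB ▸ hφu p.1 p.2 (u p)
  have hDne : fderiv ℝ Ψ (p.1, p.2, v p) (0, 0, 1) ≠ 0 := hD ▸ hψv p.1 p.2 (v p)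
  have hwx : pdx w p = fderiv ℝ Φ (p.1, p.2, u p) (1, 0, 0)
      + pdx u p * fderiv ℝ Φ (p.1, p.2, u p) (0, 0, 1) := by
    rw [pdx, hw', comp_fderiv Φ hΦd u p hud (1, 0), expand3]
    simp [pdx]
  have hwy : pdy w p = fderiv ℝ Φ (p.1, p.2, u p) (0, 1, 0)
      + pdy u p * fderiv ℝ Φ (p.1, p.2, u p) (0, 0, 1) := by
    rw [pdy, hw', comp_fderiv Φ hΦd u p hud (0, 1), expand3]
    simp [pdy]
  have hzx : pdx z p = fderiv ℝ Ψ (p.1, p.2, v p) (1, 0, 0)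
      + pdx v p * fderiv ℝ Ψ (p.1, p.2, v p) (0, 0, 1) := by
    rw [pdx, hz', comp_fderiv Ψ hΨd v p hvd (1, 0), expand3]
    simp [pdx]
  have hzy : pdy z p = fderiv ℝ Ψ (p.1, p.2, v p) (0, 1, 0)
      + pdy v p * fderiv ℝ Ψ (p.1, p.2, v p) (0, 0, 1) := by
    rw [pdy, hz', comp_fderiv Ψ hΨd v p hvd (0, 1), expand3]
    simp [pdy]
  constructor
  · rw [hwx, hzx, hA, hB, hC, hD, hBT1 p hp]
    field_simp
    ring
  · rw [hzy, hwy, hAy, hB, hCy, hD, hBT2 p hp]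
    field_simp
    ring
end

section
/- Let Ω ⊆ ℝⁿ be open, let X, Y : Ω → ℝⁿ be smooth vector fields, let x : Ω → ℝ be a smooth function, and let m, n : ℝ → ℝ be smooth functions such that for every point P ∈ Ω: (i) the directional derivative of x along X at P equals m(x(P)), (ii) the directional derivative of x along Y at P equals n(x(P)), and (iii) X(Y(x)) = Y(X(x)) at P, where Z(f) denotes the directional derivative of f along the vector field Z (condition (iii) holds in particular whenever the Lie bracket [X,Y] vanishes). Then: (a) m′(x(P))·n(x(P)) = m(x(P))·n′(x(P)) for every P ∈ Ω; and (b) if I ⊆ x(Ω) is an interval on which m is nowhere zero and n(t₀) = 0 for some t₀ ∈ I, then n vanishes identically on I. -/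
/-- Let `X, Y` be smooth vector fields on an open set `Ω ⊆ ℝⁿ`, `x : Ω → ℝ` smooth, and
`m, n : ℝ → ℝ` smooth, with `X(x) = m ∘ x`, `Y(x) = n ∘ x`, and `X(Y(x)) = Y(X(x))` on
`Ω` (the last holds in particular when `[X,Y] = 0`).  Then (a) `m′(x)·n(x) = m(x)·n′(x)`
on `Ω`; and (b) if `I ⊆ x(Ω)` is an interval on which `m` is nowhere zero and `n`
vanishes at some point of `I`, then `n` vanishes identically on `I`. -/
theorem commuting_symmetry_pairing_vanishes {N : ℕ}
    (Ω : Set (EuclideanSpace ℝ (Fin N))) (hΩ : IsOpen Ω)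
    (X Y : EuclideanSpace ℝ (Fin N) → EuclideanSpace ℝ (Fin N))
    (hX : ContDiffOn ℝ (⊤ : ℕ∞) X Ω) (hY : ContDiffOn ℝ (⊤ : ℕ∞) Y Ω)
    (x : EuclideanSpace ℝ (Fin N) → ℝ) (hx : ContDiffOn ℝ (⊤ : ℕ∞) x Ω)
    (m n : ℝ → ℝ) (hm : ContDiff ℝ (⊤ : ℕ∞) m) (hn : ContDiff ℝ (⊤ : ℕ∞) n)
    (hXx : ∀ P ∈ Ω, fderiv ℝ x P (X P) = m (x P))
    (hYx : ∀ P ∈ Ω, fderiv ℝ x P (Y P) = n (x P))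
    (hcomm : ∀ P ∈ Ω,
      fderiv ℝ (fun Q => fderiv ℝ x Q (Y Q)) P (X P)
        = fderiv ℝ (fun Q => fderiv ℝ x Q (X Q)) P (Y P)) :
    (∀ P ∈ Ω, deriv m (x P) * n (x P) = m (x P) * deriv n (x P)) ∧
    (∀ I : Set ℝ, I.OrdConnected → I ⊆ x '' Ω → (∀ t ∈ I, m t ≠ 0) →
      ∀ t₀ ∈ I, n t₀ = 0 → ∀ t ∈ I, n t = 0) := by
  -- key computation: derivative of (f ∘ x) along a field W at P ∈ Ω
  have key : ∀ (Z W : EuclideanSpace ℝ (Fin N) → EuclideanSpace ℝ (Fin N))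
      (f : ℝ → ℝ), ContDiff ℝ (⊤ : ℕ∞) f → (∀ P ∈ Ω, fderiv ℝ x P (Z P) = f (x P)) →
      ∀ P ∈ Ω, fderiv ℝ (fun Q => fderiv ℝ x Q (Z Q)) P (W P)
        = deriv f (x P) * fderiv ℝ x P (W P) := by
    intro Z W f hf hZx P hP
    have hxP : DifferentiableAt ℝ x P :=
      (hx.contDiffAt (hΩ.mem_nhds hP)).differentiableAt (by simp)
    have heq : (fun Q => fderiv ℝ x Q (Z Q)) =ᶠ[nhds P] (f ∘ x) := by
      filter_upwards [hΩ.mem_nhds hP] with Q hQ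
      exact hZx Q hQ
    rw [heq.fderiv_eq]
    rw [fderiv_comp P (hf.differentiable (by simp) (x P)) hxP]
    have hfd : fderiv ℝ f (x P) = ContinuousLinearMap.smulRight (1 : ℝ →L[ℝ] ℝ) (deriv f (x P)) :=
      ((hf.differentiable (by simp) (x P)).hasDerivAt).hasFDerivAt.fderiv
    rw [ContinuousLinearMap.comp_apply, hfd]
    simp [mul_comm]
  have parta : ∀ P ∈ Ω, deriv m (x P) * n (x P) = m (x P) * deriv n (x P) := by
    intro P hP
    have h1 := key Y X n hn hYx P hP
    have h2 := key X Y m hm hXx P hP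
    have hc := hcomm P hP
    rw [h1, h2, hXx P hP, hYx P hP] at hc
    linarith
  refine ⟨parta, ?_⟩
  intro I hI hIsub hmne t₀ ht₀ hn₀ t ht
  -- relation on I
  have rel : ∀ s ∈ I, deriv m s * n s = m s * deriv n s := by
    intro s hs
    obtain ⟨P, hP, rfl⟩ := hIsub hs
    exact parta P hP
  set g : ℝ → ℝ := fun s => n s / m s with hg
  have hderiv : ∀ s ∈ I, HasFDerivWithinAt g (0 : ℝ →L[ℝ] ℝ) I s := by
    intro s hs
    have hns : HasDerivAt n (deriv n s) s :=
      ((hn.differentiable (by simp)) s).hasDerivAt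
    have hms : HasDerivAt m (deriv m s) s :=
      ((hm.differentiable (by simp)) s).hasDerivAt
    have hdiv := hns.div hms (hmne s hs)
    have hz : (deriv n s * m s - n s * deriv m s) / m s ^ 2 = 0 := by
      have := rel s hs
      have : deriv n s * m s - n s * deriv m s = 0 := by linarith
      rw [this]; simp
    rw [hz] at hdiv
    have h0 : ContinuousLinearMap.smulRight (1 : ℝ →L[ℝ] ℝ) (0 : ℝ) = 0 := by
      ext; simp
    have h2 : HasDerivWithinAt g 0 I s := hdiv.hasDerivWithinAt
    rw [hasDerivWithinAt_iff_hasFDerivWithinAt, ContinuousLinearMap.toSpanSingleton_zero] at h2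
    exact h2
  have hconv : Convex ℝ I := hI.convex
  have hbound : ∀ s ∈ I, ‖(0 : ℝ →L[ℝ] ℝ)‖ ≤ 0 := by simp
  have hconst := hconv.norm_image_sub_le_of_norm_hasFDerivWithin_le
    (f' := fun _ => (0 : ℝ →L[ℝ] ℝ)) hderiv hbound ht₀ ht
  have : g t = g t₀ := by
    have : ‖g t - g t₀‖ ≤ 0 := by simpa using hconst
    have := norm_le_zero_iff.mp this
    linarith [sub_eq_zero.mp this]
  have hgt : g t = 0 := by rw [this, hg]; simp [hn₀]
  have := hgt
  rw [hg] at this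
  simp only [div_eq_zero_iff] at this
  rcases this with h | h
  · exact h
  · exact absurd h (hmne t ht)
end
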